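/- arXiv:2009.01656 — 5 statements merged into one kernel-verified Lean document; each statement's English description precedes it below -/
import Mathlib

section
/- For every integer n ≥ 0 and every real t, the Legendre polynomial L_n satisfies Laplace's first integral formula: L_n(t) = (1/π) ∫₀^π (t + √(t²−1) cos φ)^n dφ, where for |t| < 1 the square root is purely imaginary but the integral is real. -/
/-- The `n`-th Legendre polynomial, defined via Rodrigues' formula. -/
noncomputable def legendre (n : ℕ) : ℝ → ℝ := fun t =>
  ((-1 : ℝ) ^ n / (2 ^ n * n.factorial)) * iteratedDeriv n (fun x : ℝ => (1 - x ^ 2) ^ n) t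

open Complex intervalIntegral Real


open Polynomial Finset in
lemma iteratedDeriv_poly (p : ℝ[X]) (n : ℕ) :
    iteratedDeriv n (fun x => p.eval x) = fun x => (derivative^[n] p).eval x := by
  induction n with
  | zero => simp
  | succ n ih =>
    rw [iteratedDeriv_succ, ih, Function.iterate_succ_apply']
    ext x
    exact Polynomial.deriv _

open Polynomial Finset in
lemma legendre_closed (n : ℕ) (t : ℝ) :
    legendre n t = ∑ k ∈ range (n + 1),
      (n.choose k : ℝ) ^ 2 * ((t - 1) / 2) ^ k * ((t + 1) / 2) ^ (n - k) := by
  have hfun : (fun x : ℝ => (1 - x ^ 2) ^ n) =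
      fun x => (((-1 : ℝ[X]) ^ n * ((X - C 1) ^ n * (X + C 1) ^ n)).eval x) := by
    ext x
    simp only [eval_mul, eval_pow, eval_sub, eval_add, eval_X, eval_C, eval_neg, eval_one]
    rw [← mul_pow, ← mul_pow]
    ring_nf
  rw [legendre, hfun, iteratedDeriv_poly]
  have hc : (-1 : ℝ[X]) ^ n = C ((-1:ℝ)^n) := by simp
  rw [hc, iterate_derivative_C_mul, iterate_derivative_mul]
  simp only [eval_mul, eval_C, eval_finset_sum, eval_smul, smul_eq_mul,
    iterate_derivative_X_sub_pow, iterate_derivative_X_add_pow, eval_mul, eval_smul,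
    eval_pow, eval_sub, eval_add, eval_X, eval_C, eval_one, smul_eq_mul, nsmul_eq_mul, eval_natCast]
  rw [Finset.mul_sum, Finset.mul_sum]
  refine Finset.sum_congr rfl fun k hk => ?_
  have hk' : k ≤ n := by
    have := Finset.mem_range.mp hk; omega
  have h1 : n - (n - k) = k := by omega
  rw [h1]
  have key : (n.choose k : ℝ) * k.factorial * (n-k).factorial = n.factorial := by
    exact_mod_cast Nat.choose_mul_factorial_mul_factorial hk'
  have h2 : (2:ℝ)^n = 2^k * 2^(n-k) := by
    rw [← pow_add]; congr 1; omega
  have hd1 : (n.descFactorial (n-k) : ℝ) = (n-k).factorial * n.choose k := by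
    rw [← Nat.choose_symm hk']
    exact_mod_cast Nat.descFactorial_eq_factorial_mul_choose _ _
  have hd2 : (n.descFactorial k : ℝ) = k.factorial * n.choose k := by
    exact_mod_cast Nat.descFactorial_eq_factorial_mul_choose _ _
  have hm2 : ((-1:ℝ))^(n*2) = 1 := by
    rw [mul_comm, pow_mul]; norm_num
  have hnf : (n.factorial : ℝ) ≠ 0 := by positivity
  rw [div_pow, div_pow, hd1, hd2]
  field_simp [h2]
  linear_combination ((n.choose k:ℝ) * ((n-k).factorial * n.choose k) * (k.factorial * n.choose k) * (-1+t)^k * (1+t)^(n-k) * 2^k * 2^(n-k)) * hm2 + ((n.choose k:ℝ)^2 * (-1+t)^k * (1+t)^(n-k) * 2^k * 2^(n-k)) * key - ((n.choose k:ℝ)^2 * (n.factorial:ℝ) * (-1+t)^k * (1+t)^(n-k)) * h2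

lemma Iexp (m : ℤ) : (∫ φ in (0:ℝ)..(2*π), Complex.exp (m * φ * Complex.I)) =
    if m = 0 then (2*π : ℂ) else 0 := by
  split_ifs with h
  · subst h; simp
  · have hc : (m : ℂ) * Complex.I ≠ 0 := by
      simp [Complex.I_ne_zero, h]
    have : (∫ φ in (0:ℝ)..(2*π), Complex.exp ((m * Complex.I) * φ)) =
        (Complex.exp ((m*Complex.I) * ((2*π:ℝ):ℂ)) - Complex.exp ((m*Complex.I) * ((0:ℝ):ℂ))) / (m*Complex.I) :=
      integral_exp_mul_complex hc
    rw [show (fun φ : ℝ => Complex.exp (m * φ * Complex.I)) = fun φ : ℝ => Complex.exp ((m * Complex.I) * φ) from by ext φ; ring_nf]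
    push_cast at this
    rw [this, mul_zero, Complex.exp_zero]
    rw [show ((m:ℂ)*Complex.I) * (2*π) = m * (2*π*Complex.I) by ring, Complex.exp_int_mul_two_pi_mul_I]
    simp

open Finset in
lemma key_integral (n : ℕ) (a b : ℂ) :
    (∫ φ in (0:ℝ)..(2*π),
        ((a + b * Complex.exp (φ * Complex.I)) * (a + b * Complex.exp (-(φ * Complex.I)))) ^ n)
    = (2*π) * ∑ k ∈ range (n+1), (n.choose k : ℂ)^2 * (a^2)^k * (b^2)^(n-k) := by
  have hpt : ∀ φ : ℝ, ((a + b * Complex.exp (φ * Complex.I)) * (a + b * Complex.exp (-(φ * Complex.I)))) ^ n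
      = ∑ j ∈ range (n+1), ∑ k ∈ range (n+1),
          (a^j * b^(n-j) * (n.choose j : ℂ) * (a^k * b^(n-k) * (n.choose k : ℂ))) *
            Complex.exp ((((k:ℤ) - (j:ℤ) : ℤ) : ℂ) * φ * Complex.I) := by
    intro φ
    rw [mul_pow, add_pow, add_pow, Finset.sum_mul_sum]
    refine Finset.sum_congr rfl fun j hj => Finset.sum_congr rfl fun k hk => ?_
    have hj' : j ≤ n := by have := Finset.mem_range.mp hj; omega
    have hk' : k ≤ n := by have := Finset.mem_range.mp hk; omega
    rw [mul_pow, mul_pow, ← Complex.exp_nat_mul, ← Complex.exp_nat_mul]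
    have hE : Complex.exp (((n-j : ℕ):ℂ) * (φ * Complex.I)) *
        Complex.exp (((n-k : ℕ):ℂ) * -(φ * Complex.I)) =
        Complex.exp ((((k:ℤ) - (j:ℤ) : ℤ) : ℂ) * φ * Complex.I) := by
      rw [← Complex.exp_add]
      congr 1
      push_cast [hj', hk']
      ring
    rw [← hE]
    ring
  have hcont : ∀ (j k : ℕ), Continuous fun φ : ℝ =>
      (a^j * b^(n-j) * (n.choose j:ℂ) * (a^k * b^(n-k) * (n.choose k:ℂ))) *
        Complex.exp ((((k:ℤ) - (j:ℤ) : ℤ):ℂ) * φ * Complex.I) := by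
    intro j k; fun_prop
  simp_rw [hpt]
  rw [intervalIntegral.integral_finset_sum
    (fun j _ => ((continuous_finset_sum _ (fun k _ => hcont j k)).intervalIntegrable _ _))]
  have step : ∀ j ∈ range (n+1),
      (∫ φ in (0:ℝ)..(2*π), ∑ k ∈ range (n+1),
          (a^j * b^(n-j) * (n.choose j : ℂ) * (a^k * b^(n-k) * (n.choose k : ℂ))) *
            Complex.exp ((((k:ℤ) - (j:ℤ) : ℤ) : ℂ) * φ * Complex.I))
      = ∑ k ∈ range (n+1),
          (a^j * b^(n-j) * (n.choose j : ℂ) * (a^k * b^(n-k) * (n.choose k : ℂ))) *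
            (if ((k:ℤ) - (j:ℤ) : ℤ) = 0 then (2*π:ℂ) else 0) := by
    intro j _
    rw [intervalIntegral.integral_finset_sum (fun k _ => (hcont j k).intervalIntegrable _ _)]
    refine Finset.sum_congr rfl fun k hk => ?_
    rw [intervalIntegral.integral_const_mul, Iexp]
  rw [Finset.sum_congr rfl step]
  simp only [sub_eq_zero, Int.natCast_inj, mul_ite, mul_zero, Finset.sum_ite_eq']
  rw [Finset.mul_sum]
  refine Finset.sum_congr rfl fun j hj => ?_
  rw [if_pos hj]
  ring

lemma cos_form (a b : ℂ) (φ : ℝ) :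
    (a + b * Complex.exp (φ * Complex.I)) * (a + b * Complex.exp (-(φ * Complex.I)))
    = a^2 + b^2 + 2*a*b*(Real.cos φ : ℂ) := by
  have h : ((Real.cos φ : ℂ)) = (Complex.exp (φ * Complex.I) + Complex.exp (-(φ * Complex.I)))/2 := by
    rw [Complex.ofReal_cos, Complex.cos]
    ring_nf
  have h2 : Complex.exp (φ * Complex.I) * Complex.exp (-(φ * Complex.I)) = 1 := by
    rw [← Complex.exp_add]; simp
  rw [h]
  linear_combination (b^2) * h2

lemma half_to_full (f : ℝ → ℂ) (hf : Continuous f) (hsym : ∀ x, f (2*π - x) = f x) :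
    ∫ x in (0:ℝ)..π, f x = (1/2) * ∫ x in (0:ℝ)..(2*π), f x := by
  have h1 : (∫ x in (0:ℝ)..π, f x) + (∫ x in (π:ℝ)..(2*π), f x) = ∫ x in (0:ℝ)..(2*π), f x :=
    integral_add_adjacent_intervals (hf.intervalIntegrable _ _) (hf.intervalIntegrable _ _)
  have h2 : (∫ x in (π:ℝ)..(2*π), f x) = ∫ x in (0:ℝ)..π, f x := by
    calc (∫ x in (π:ℝ)..(2*π), f x) = ∫ x in (2*π-π:ℝ)..(2*π-0), f x := by rw [show 2*π-π = π by ring, sub_zero]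
    _ = ∫ x in (0:ℝ)..π, f (2*π - x) := (intervalIntegral.integral_comp_sub_left f (2*π)).symm
    _ = ∫ x in (0:ℝ)..π, f x := by simp_rw [hsym]
  rw [← h1, h2]
  ring

lemma neg_c (tc c : ℂ) (n : ℕ) :
    (∫ φ in (0:ℝ)..π, (tc + c * (Real.cos φ : ℂ))^n)
      = ∫ φ in (0:ℝ)..π, (tc + (-c) * (Real.cos φ : ℂ))^n := by
  have h := intervalIntegral.integral_comp_sub_left
    (a := 0) (b := π) (fun φ : ℝ => (tc + c * (Real.cos φ : ℂ))^n) π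
  simp only [sub_zero, sub_self] at h
  rw [← h]
  refine intervalIntegral.integral_congr fun x _ => ?_
  simp [Real.cos_pi_sub]

open Finset in
/-- Laplace's first integral formula for the Legendre polynomials:
`L_n(t) = (1/π) ∫₀^π (t + √(t²−1) cos φ)^n dφ`, where the square root is the
principal complex square root (purely imaginary for `|t| < 1`). -/
theorem legendre_laplace_first_integral (n : ℕ) (t : ℝ) :
    (legendre n t : ℂ) =
      (1 / (Real.pi : ℂ)) *
        ∫ φ in (0:ℝ)..Real.pi,
          ((t : ℂ) + ((t : ℂ) ^ 2 - 1) ^ ((1 : ℂ) / 2) * (Real.cos φ : ℂ)) ^ n := by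
  set s : ℂ := ((t:ℂ)^2 - 1) ^ ((1:ℂ)/2) with hs_def
  set a : ℂ := (((t:ℂ)+1)/2) ^ ((1:ℂ)/2) with ha_def
  set b : ℂ := (((t:ℂ)-1)/2) ^ ((1:ℂ)/2) with hb_def
  have h12 : (1:ℂ)/2 = (((2:ℕ):ℂ))⁻¹ := by norm_num
  have ha : a^2 = ((t:ℂ)+1)/2 := by
    rw [ha_def, h12]; exact Complex.cpow_nat_inv_pow _ two_ne_zero
  have hb : b^2 = ((t:ℂ)-1)/2 := by
    rw [hb_def, h12]; exact Complex.cpow_nat_inv_pow _ two_ne_zero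
  have hs : s^2 = (t:ℂ)^2 - 1 := by
    rw [hs_def, h12]; exact Complex.cpow_nat_inv_pow _ two_ne_zero
  have main : (∫ φ in (0:ℝ)..π, ((t:ℂ) + (2*a*b) * (Real.cos φ : ℂ))^n)
      = π * ∑ k ∈ range (n+1), (n.choose k : ℂ)^2 * (a^2)^k * (b^2)^(n-k) := by
    have hpt : ∀ φ : ℝ, ((t:ℂ) + (2*a*b) * (Real.cos φ:ℂ))^n
        = ((a + b * Complex.exp (φ * Complex.I)) * (a + b * Complex.exp (-(φ * Complex.I))))^n := by
      intro φ
      rw [cos_form]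
      congr 1
      linear_combination -ha - hb
    have hf : Continuous fun φ : ℝ => ((t:ℂ) + (2*a*b) * (Real.cos φ:ℂ))^n := by fun_prop
    have hsym : ∀ x : ℝ, ((t:ℂ) + (2*a*b) * (Real.cos (2*π - x):ℂ))^n
        = ((t:ℂ) + (2*a*b) * (Real.cos x:ℂ))^n := by
      intro x; rw [Real.cos_two_pi_sub]
    rw [half_to_full _ hf hsym]
    rw [intervalIntegral.integral_congr (g := fun φ : ℝ =>
      ((a + b * Complex.exp (φ * Complex.I)) * (a + b * Complex.exp (-(φ * Complex.I))))^n)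
      (fun x _ => hpt x)]
    rw [key_integral]
    ring
  have hfactor : (2*a*b - s) * (2*a*b + s) = 0 := by
    linear_combination (4*b^2)*ha + (2*((t:ℂ)+1))*hb - hs
  have hI : (∫ φ in (0:ℝ)..π, ((t:ℂ) + s * (Real.cos φ:ℂ))^n)
      = π * ∑ k ∈ range (n+1), (n.choose k : ℂ)^2 * (a^2)^k * (b^2)^(n-k) := by
    rcases mul_eq_zero.mp hfactor with h | h
    · rw [show s = 2*a*b from (sub_eq_zero.mp h).symm]
      exact main
    · rw [show s = -(2*a*b) from by linear_combination h]
      exact ((neg_c (t:ℂ) (2*a*b) n).symm).trans main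
  rw [hI]
  have hπ : ((π:ℝ):ℂ) ≠ 0 := Complex.ofReal_ne_zero.mpr Real.pi_ne_zero
  rw [show (1 / ((π:ℝ):ℂ)) * (((π:ℝ):ℂ) * ∑ k ∈ range (n+1),
      (n.choose k : ℂ)^2 * (a^2)^k * (b^2)^(n-k))
      = ∑ k ∈ range (n+1), (n.choose k : ℂ)^2 * (a^2)^k * (b^2)^(n-k) from by
    field_simp]
  rw [legendre_closed]
  push_cast
  rw [← Finset.sum_range_reflect]
  refine Finset.sum_congr rfl fun k hk => ?_
  have hk' : k ≤ n := by have := Finset.mem_range.mp hk; omega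
  have h1 : n + 1 - 1 - k = n - k := by omega
  have h2 : n - (n - k) = k := by omega
  rw [h1, h2, Nat.choose_symm hk', ha, hb]
  ring
end

section
/- For every integer n ≥ 0 and every real t with |t| > 1, the Legendre polynomial satisfies |L_n(t)| ≤ (|t| + √(t²−1))^n. -/
open Finset

lemma choose_mul_descFactorial_mul_descFactorial_sub {n k : ℕ} (hk : k ≤ n) :
    n.choose k * n.descFactorial k * n.descFactorial (n - k) = n.choose k ^ 2 * n.factorial := by
  rw [Nat.descFactorial_eq_factorial_mul_choose, Nat.descFactorial_eq_factorial_mul_choose,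
    Nat.choose_symm hk, ← Nat.choose_mul_factorial_mul_factorial hk]
  ring

section

variable {𝕜 : Type*} [NontriviallyNormedField 𝕜]

lemma iteratedDeriv_sub_const_pow (n k : ℕ) (a x : 𝕜) :
    iteratedDeriv k (fun y => (y - a) ^ n) x = n.descFactorial k * (x - a) ^ (n - k) := by
  simp only [iteratedDeriv_comp_sub_const k (· ^ n), iteratedDeriv_pow]

lemma iteratedDeriv_sub_pow_mul_sub_pow (n : ℕ) (a b x : 𝕜) :
    iteratedDeriv n (fun y => (y - a) ^ n * (y - b) ^ n) x =
      n.factorial *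
        ∑ k ∈ range (n + 1), (n.choose k : 𝕜) ^ 2 * (x - a) ^ (n - k) * (x - b) ^ k := by
  rw [iteratedDeriv_fun_mul (by fun_prop) (by fun_prop), mul_sum]
  refine sum_congr rfl fun k hk => ?_
  have hkn : k ≤ n := Nat.lt_succ_iff.mp (mem_range.mp hk)
  rw [iteratedDeriv_sub_const_pow, iteratedDeriv_sub_const_pow, Nat.sub_sub_self hkn]
  have hcoef := congrArg (Nat.cast (R := 𝕜)) (choose_mul_descFactorial_mul_descFactorial_sub hkn)
  push_cast at hcoef
  linear_combination (x - a) ^ (n - k) * (x - b) ^ k * hcoef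

end

lemma legendre_eq_sum (n : ℕ) (t : ℝ) :
    legendre n t =
      (∑ k ∈ range (n + 1), (n.choose k : ℝ) ^ 2 * (t - 1) ^ (n - k) * (t + 1) ^ k) / 2 ^ n := by
  have hfactor : (fun x : ℝ => (1 - x ^ 2) ^ n) =
      fun x => (-1) ^ n * ((x - 1) ^ n * (x - (-1)) ^ n) := by
    funext x
    rw [← mul_pow, ← mul_pow]
    ring
  have hfac : (n.factorial : ℝ) ≠ 0 := by positivity
  rw [legendre, hfactor, iteratedDeriv_const_mul_field, iteratedDeriv_sub_pow_mul_sub_pow]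
  simp only [sub_neg_eq_add]
  field_simp
  rw [← pow_mul, pow_mul', neg_one_sq, one_pow, one_mul]

lemma sum_choose_sq_mul_pow_le_sqrt_add_sqrt_pow {a b : ℝ} (ha : 0 ≤ a) (hb : 0 ≤ b) (n : ℕ) :
    ∑ k ∈ range (n + 1), (n.choose k : ℝ) ^ 2 * a ^ (n - k) * b ^ k ≤
      (√a + √b) ^ (2 * n) := by
  calc ∑ k ∈ range (n + 1), (n.choose k : ℝ) ^ 2 * a ^ (n - k) * b ^ k
      = ∑ k ∈ range (n + 1), ((n.choose k : ℝ) * √a ^ (n - k) * √b ^ k) ^ 2 := by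
        refine sum_congr rfl fun k _ => ?_
        rw [mul_pow, mul_pow, ← pow_mul, ← pow_mul, mul_comm (n - k), mul_comm k, pow_mul,
          pow_mul, Real.sq_sqrt ha, Real.sq_sqrt hb]
    _ ≤ (∑ k ∈ range (n + 1), (n.choose k : ℝ) * √a ^ (n - k) * √b ^ k) ^ 2 :=
        sum_sq_le_sq_sum_of_nonneg fun k _ => by positivity
    _ = (√a + √b) ^ (2 * n) := by
        rw [pow_mul', add_comm √a, add_pow]
        congr 1
        exact sum_congr rfl fun k _ => by ring

lemma abs_sum_choose_sq_mul_pow_le (x y : ℝ) (n : ℕ) :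
    |∑ k ∈ range (n + 1), (n.choose k : ℝ) ^ 2 * x ^ (n - k) * y ^ k| ≤
      (√|x| + √|y|) ^ (2 * n) :=
  calc _ ≤ ∑ k ∈ range (n + 1), |(n.choose k : ℝ) ^ 2 * x ^ (n - k) * y ^ k| :=
        abs_sum_le_sum_abs _ _
    _ = ∑ k ∈ range (n + 1), (n.choose k : ℝ) ^ 2 * |x| ^ (n - k) * |y| ^ k := by
        simp only [abs_mul, abs_pow, Nat.abs_cast]
    _ ≤ _ := sum_choose_sq_mul_pow_le_sqrt_add_sqrt_pow (abs_nonneg x) (abs_nonneg y) n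

lemma sq_sqrt_abs_sub_one_add_sqrt_abs_add_one {t : ℝ} (ht : 1 ≤ |t|) :
    (√|t - 1| + √|t + 1|) ^ 2 = 2 * (|t| + √(t ^ 2 - 1)) := by
  have hsum : |t - 1| + |t + 1| = 2 * |t| := by
    rcases le_abs'.mp ht with h | h
    · rw [abs_of_neg (by linarith), abs_of_nonpos (by linarith), abs_of_neg (by linarith)]
      ring
    · rw [abs_of_nonneg (by linarith), abs_of_nonneg (by linarith), abs_of_nonneg (by linarith)]
      ring
  have hprod : √|t - 1| * √|t + 1| = √(t ^ 2 - 1) := by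
    rw [← Real.sqrt_mul (abs_nonneg _), ← abs_mul,
      abs_of_nonneg (by nlinarith [sq_abs t] : 0 ≤ (t - 1) * (t + 1))]
    ring_nf
  rw [add_sq, Real.sq_sqrt (abs_nonneg _), Real.sq_sqrt (abs_nonneg _), mul_assoc, hprod]
  linarith

/-- For `|t| > 1`, `|L_n(t)| ≤ (|t| + √(t²−1))^n`. -/
theorem abs_legendre_le_of_one_lt_abs (n : ℕ) (t : ℝ) (ht : 1 < |t|) :
    |legendre n t| ≤ (|t| + Real.sqrt (t ^ 2 - 1)) ^ n := by
  have h2n : (0 : ℝ) < 2 ^ n := by positivity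
  rw [legendre_eq_sum, abs_div, abs_of_pos h2n, div_le_iff₀ h2n]
  calc _ ≤ (√|t - 1| + √|t + 1|) ^ (2 * n) := abs_sum_choose_sq_mul_pow_le _ _ n
    _ = (|t| + √(t ^ 2 - 1)) ^ n * 2 ^ n := by
        rw [pow_mul, sq_sqrt_abs_sub_one_add_sqrt_abs_add_one ht.le, mul_pow, mul_comm]
end

section
/- Let a < b < c be real numbers, set t₀ = (a+b)/2 and λ = (c−t₀)/(b−t₀). Then for every polynomial g of degree at most p, ∫_b^c g(t)² dt ≤ (1/2)[(λ + √(λ²−1))^{2p+1} − 1] ∫_a^b g(t)² dt. -/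
open MeasureTheory

noncomputable section DomInvSection
namespace DomInv
open Polynomial Finset intervalIntegral


def W (n : ℕ) : ℝ[X] := ((X:ℝ[X])^2 - 1)^n

def P (n : ℕ) : ℝ[X] := C (((2:ℝ)^n * n.factorial)⁻¹) * derivative^[n] (W n)

lemma W_eq (n : ℕ) : W n = ((X:ℝ[X]) - C 1)^n * ((X:ℝ[X]) + C 1)^n := by
  rw [W, ← mul_pow]; congr 1; rw [C_1]; ring

lemma P_eval_eq (n : ℕ) (s : ℝ) :
    (P n).eval s = ∑ k ∈ range (n+1),
      (n.choose k : ℝ)^2 * ((s-1)/2)^k * ((s+1)/2)^(n-k) := by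
  rw [P, W_eq, Polynomial.iterate_derivative_mul]
  simp only [iterate_derivative_X_sub_pow, iterate_derivative_X_add_pow, Nat.sub_sub_self,
    smul_smul, eval_mul, eval_C, eval_finset_sum, eval_smul, smul_eq_mul, eval_mul, eval_pow,
    eval_sub, eval_add, eval_X, eval_one, Finset.mul_sum]
  refine Finset.sum_congr rfl fun k hk => ?_
  have hkn : k ≤ n := Nat.lt_succ_iff.mp (Finset.mem_range.mp hk)
  have keyN : n.choose k * (n.descFactorial (n-k) * n.descFactorial k)
      = n.choose k ^ 2 * n.factorial := by
    rw [Nat.descFactorial_eq_factorial_mul_choose, Nat.descFactorial_eq_factorial_mul_choose,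
      Nat.choose_symm hkn, ← Nat.choose_mul_factorial_mul_factorial hkn]
    ring
  have key : ((n.choose k : ℝ)) * ((n.descFactorial (n-k) : ℝ) * (n.descFactorial k))
      = (n.choose k:ℝ) ^ 2 * n.factorial := by exact_mod_cast congrArg (Nat.cast : ℕ → ℝ) keyN
  have h2 : ((2:ℝ))^k * 2^(n-k) = 2^n := by
    rw [← pow_add, Nat.add_sub_cancel' hkn]
  have hf : (n.factorial : ℝ) ≠ 0 := Nat.cast_ne_zero.mpr n.factorial_ne_zero
  have h2n : ((2:ℝ))^n ≠ 0 := by positivity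
  rw [Nat.sub_sub_self hkn]
  simp only [div_pow]
  field_simp
  linear_combination ((-1+s)^k * (1+s)^(n-k) * 2^(n-k) * 2^k) * key
    + ((n.choose k:ℝ)^2 * n.factorial * (-1+s)^k * (1+s)^(n-k)) * h2


lemma sqrt_ab {s : ℝ} (hs : 1 ≤ s) :
    (Real.sqrt ((s-1)/2) + Real.sqrt ((s+1)/2))^2 = s + Real.sqrt (s^2-1) := by
  have ha : (0:ℝ) ≤ (s-1)/2 := by linarith
  have hb : (0:ℝ) ≤ (s+1)/2 := by linarith
  have h1 : Real.sqrt ((s-1)/2) * Real.sqrt ((s+1)/2) = Real.sqrt (s^2-1) / 2 := by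
    rw [← Real.sqrt_mul ha, show (s-1)/2 * ((s+1)/2) = (s^2-1) * (1/2)^2 by ring,
      Real.sqrt_mul (by nlinarith), Real.sqrt_sq (by norm_num : (0:ℝ) ≤ 1/2)]
    ring
  have h2 := Real.sq_sqrt ha
  have h3 := Real.sq_sqrt hb
  nlinarith [Real.sqrt_nonneg ((s-1)/2), Real.sqrt_nonneg ((s+1)/2)]


lemma P_eval_nonneg (n : ℕ) {s : ℝ} (hs : 1 ≤ s) : 0 ≤ (P n).eval s := by
  rw [P_eval_eq]
  refine Finset.sum_nonneg fun k _ => ?_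
  have : (0:ℝ) ≤ (s-1)/2 := by linarith
  have : (0:ℝ) ≤ (s+1)/2 := by linarith
  positivity

lemma P_eval_le (n : ℕ) {s : ℝ} (hs : 1 ≤ s) :
    (P n).eval s ≤ (s + Real.sqrt (s^2-1))^n := by
  have ha : (0:ℝ) ≤ (s-1)/2 := by linarith
  have hb : (0:ℝ) ≤ (s+1)/2 := by linarith
  have hsq : ∀ x : ℝ, 0 ≤ x → ∀ k : ℕ, (Real.sqrt x ^ k)^2 = x^k := fun x hx k => by
    rw [← pow_mul, mul_comm, pow_mul, Real.sq_sqrt hx]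
  rw [P_eval_eq]
  calc ∑ k ∈ range (n+1), (n.choose k : ℝ)^2 * ((s-1)/2)^k * ((s+1)/2)^(n-k)
      = ∑ k ∈ range (n+1),
        ((n.choose k : ℝ) * Real.sqrt ((s-1)/2)^k * Real.sqrt ((s+1)/2)^(n-k))^2 := by
        refine Finset.sum_congr rfl fun k _ => ?_
        rw [mul_pow, mul_pow, hsq _ ha, hsq _ hb]
    _ ≤ (∑ k ∈ range (n+1),
        (n.choose k : ℝ) * Real.sqrt ((s-1)/2)^k * Real.sqrt ((s+1)/2)^(n-k))^2 := by
        refine Finset.sum_sq_le_sq_sum_of_nonneg fun k _ => ?_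
        positivity
    _ = ((Real.sqrt ((s-1)/2) + Real.sqrt ((s+1)/2))^n)^2 := by
        rw [add_pow]
        congr 1
        refine Finset.sum_congr rfl fun k _ => ?_
        ring
    _ = (s + Real.sqrt (s^2-1))^n := by
        rw [← pow_mul, mul_comm, pow_mul, sqrt_ab hs]


lemma natDegree_W (n : ℕ) : (W n).natDegree = 2*n := by
  rw [W, natDegree_pow]
  have : ((X:ℝ[X])^2 - 1) = X^2 - C 1 := by rw [C_1]
  rw [this, natDegree_X_pow_sub_C]; ring

lemma natDegree_P_le (n : ℕ) : (P n).natDegree ≤ n := by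
  refine le_trans (natDegree_C_mul_le _ _) (le_trans (natDegree_iterate_derivative _ _) ?_)
  rw [natDegree_W]; omega

lemma W_monic (n : ℕ) : (W n).Monic := by
  have h : ((X:ℝ[X])^2 - 1) = X^2 - C 1 := by rw [C_1]
  rw [W, h]
  exact (monic_X_pow_sub_C (1:ℝ) (by norm_num)).pow n

lemma iterate_derivative_W_self (n : ℕ) :
    derivative^[2*n] (W n) = C ((2*n).factorial : ℝ) := by
  have hdeg : (derivative^[2*n] (W n)).natDegree ≤ 0 := by
    refine le_trans (natDegree_iterate_derivative _ _) ?_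
    rw [natDegree_W]; omega
  rw [Polynomial.eq_C_of_natDegree_le_zero hdeg, coeff_iterate_derivative]
  simp only [zero_add]
  rw [show (W n).coeff (2*n) = 1 by
    have := (W_monic n).leadingCoeff; rwa [leadingCoeff, natDegree_W] at this]
  simp [Nat.descFactorial_self]

lemma W_deriv_dvd (n : ℕ) : ∀ k, k ≤ n → ∃ q : ℝ[X],
    derivative^[k] (W n) = ((X:ℝ[X])^2-1)^(n-k) * q := by
  intro k
  induction k with
  | zero => intro _; exact ⟨1, by simp [W]⟩
  | succ k ih =>
    intro hk
    obtain ⟨q, hq⟩ := ih (by omega)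
    set m := n - (k+1) with hm
    have hnk : n - k = m + 1 := by omega
    refine ⟨C ((m+1 : ℕ) : ℝ) * (C 2 * X) * q + ((X:ℝ[X])^2-1) * derivative q, ?_⟩
    rw [Function.iterate_succ_apply', hq, hnk]
    have hd : derivative ((X:ℝ[X])^2 - 1) = C 2 * X := by
      simp [derivative_pow]
    rw [derivative_mul, derivative_pow, hd]
    push_cast
    ring

lemma W_eval_boundary {n k : ℕ} (hk : k < n) (x : ℝ) (hx : x = 1 ∨ x = -1) :
    eval x (derivative^[k] (W n)) = 0 := by
  obtain ⟨q, hq⟩ := W_deriv_dvd n k (le_of_lt hk)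
  rw [hq, eval_mul, eval_pow]
  have h1 : n - k ≠ 0 := by omega
  rcases hx with h | h <;> rw [h] <;> simp [zero_pow h1]

lemma polyIBP (u v : ℝ[X]) :
    ∫ x in (-1:ℝ)..1, eval x (derivative u) * eval x v
      = eval 1 u * eval 1 v - eval (-1) u * eval (-1) v
        - ∫ x in (-1:ℝ)..1, eval x u * eval x (derivative v) := by
  have h1 : ∀ x ∈ Set.uIcc (-1:ℝ) 1, HasDerivAt (fun y => eval y (u*v))
      (eval x (derivative u) * eval x v + eval x u * eval x (derivative v)) x := by
    intro x _
    simpa [derivative_mul] using (u*v).hasDerivAt x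
  have h2 := intervalIntegral.integral_eq_sub_of_hasDerivAt h1
    (((derivative (u*v)).continuous.congr (by simp [derivative_mul])).intervalIntegrable _ _)
  rw [intervalIntegral.integral_add (f := fun x => eval x (derivative u) * eval x v)
    (g := fun x => eval x u * eval x (derivative v))
    (((derivative u).continuous.mul v.continuous).intervalIntegrable _ _)
    ((u.continuous.mul (derivative v).continuous).intervalIntegrable _ _)] at h2
  simp only [eval_mul] at h2
  linarith

lemma iter_IBP (n : ℕ) (q : ℝ[X]) : ∀ j, j ≤ n →
    ∫ x in (-1:ℝ)..1, eval x (derivative^[n] (W n)) * eval x q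
      = (-1:ℝ)^j * ∫ x in (-1:ℝ)..1, eval x (derivative^[n-j] (W n)) * eval x (derivative^[j] q) := by
  intro j
  induction j with
  | zero => intro _; simp
  | succ j ih =>
    intro hj
    rw [ih (by omega)]
    have hnj : n - j = (n - (j+1)) + 1 := by omega
    have key : ∫ x in (-1:ℝ)..1, eval x (derivative^[n-j] (W n)) * eval x (derivative^[j] q)
        = - ∫ x in (-1:ℝ)..1, eval x (derivative^[n-(j+1)] (W n)) * eval x (derivative^[j+1] q) := by
      rw [hnj, Function.iterate_succ_apply', polyIBP,
        W_eval_boundary (by omega : n-(j+1) < n) 1 (Or.inl rfl),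
        W_eval_boundary (by omega : n-(j+1) < n) (-1) (Or.inr rfl),
        Function.iterate_succ_apply']
      ring
    rw [key, pow_succ]
    ring


lemma int_P_mul (n : ℕ) (q : ℝ[X]) :
    ∫ x in (-1:ℝ)..1, eval x (P n) * eval x q
      = ((2:ℝ)^n * n.factorial)⁻¹ * ((-1:ℝ)^n *
          ∫ x in (-1:ℝ)..1, eval x (W n) * eval x (derivative^[n] q)) := by
  have : (fun x => eval x (P n) * eval x q)
      = fun x => ((2:ℝ)^n * n.factorial)⁻¹ * (eval x (derivative^[n] (W n)) * eval x q) := by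
    funext x; simp [P]; ring
  rw [intervalIntegral.integral_congr (fun x _ => congrFun this x),
    intervalIntegral.integral_const_mul, iter_IBP n q n le_rfl]
  simp

lemma orth {m n : ℕ} (hmn : m < n) :
    ∫ x in (-1:ℝ)..1, eval x (P n) * eval x (P m) = 0 := by
  rw [int_P_mul, iterate_derivative_eq_zero (lt_of_le_of_lt (natDegree_P_le m) hmn)]
  simp

def I (n : ℕ) : ℝ := ∫ x in (-1:ℝ)..1, eval x (W n)

lemma I_zero : I 0 = 2 := by simp [I, W]; norm_num

lemma I_rec (n : ℕ) : (2*(n:ℝ)+3) * I (n+1) = -(2*(n:ℝ)+2) * I n := by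
  have hD : derivative ((X : ℝ[X]) * W (n+1))
      = C (2*(n:ℝ)+3) * W (n+1) + C (2*(n:ℝ)+2) * W n := by
    rw [W, W, derivative_mul, derivative_pow]
    have hd : derivative ((X:ℝ[X])^2 - 1) = C 2 * X := by simp [derivative_pow]
    rw [hd, derivative_X, Nat.add_sub_cancel, pow_succ ((X:ℝ[X])^2-1) n]
    push_cast
    simp only [C_add, C_mul, map_ofNat, C_1]
    ring
  have h1 : ∀ x ∈ Set.uIcc (-1:ℝ) 1, HasDerivAt (fun y => eval y ((X:ℝ[X]) * W (n+1)))
      (eval x (C (2*(n:ℝ)+3) * W (n+1) + C (2*(n:ℝ)+2) * W n)) x := by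
    intro x _
    have := ((X:ℝ[X]) * W (n+1)).hasDerivAt x
    rwa [hD] at this
  have h2 := intervalIntegral.integral_eq_sub_of_hasDerivAt h1
    ((C (2*(n:ℝ)+3) * W (n+1) + C (2*(n:ℝ)+2) * W n).continuous.intervalIntegrable _ _)
  have hb1 : eval (1:ℝ) ((X:ℝ[X]) * W (n+1)) = 0 := by
    simp [W]
  have hb2 : eval (-1:ℝ) ((X:ℝ[X]) * W (n+1)) = 0 := by
    simp [W]
  rw [hb1, hb2] at h2
  simp only [eval_add, eval_mul, eval_C] at h2
  rw [intervalIntegral.integral_add (f := fun x => (2*(n:ℝ)+3) * eval x (W (n+1)))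
    (g := fun x => (2*(n:ℝ)+2) * eval x (W n))
    ((Continuous.mul continuous_const (W (n+1)).continuous).intervalIntegrable _ _)
    ((Continuous.mul continuous_const (W n).continuous).intervalIntegrable _ _),
    intervalIntegral.integral_const_mul, intervalIntegral.integral_const_mul] at h2
  rw [show (∫ x in (-1:ℝ)..1, eval x (W (n+1))) = I (n+1) from rfl,
    show (∫ x in (-1:ℝ)..1, eval x (W n)) = I n from rfl] at h2
  linarith

lemma I_formula (n : ℕ) :
    I n = (-1:ℝ)^n * (2^(2*n+1) * (n.factorial:ℝ)^2) / ((2*n+1).factorial) := by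
  induction n with
  | zero => simpa using I_zero
  | succ n ih =>
    have hrec := I_rec n
    have h3 : (2*(n:ℝ)+3) ≠ 0 := by positivity
    have hI : I (n+1) = -(2*(n:ℝ)+2) * I n / (2*(n:ℝ)+3) := by
      field_simp
      linarith
    rw [hI, ih]
    have hf1 : ((2*(n+1)+1).factorial : ℝ)
        = (2*(n:ℝ)+3) * ((2*(n:ℝ)+2) * ((2*n+1).factorial : ℝ)) := by
      have : 2*(n+1)+1 = (2*n+1) + 1 + 1 := by omega
      rw [this, Nat.factorial_succ, Nat.factorial_succ]
      push_cast
      ring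
    have hf2 : ((n+1).factorial : ℝ) = ((n:ℝ)+1) * (n.factorial : ℝ) := by
      rw [Nat.factorial_succ]; push_cast; ring
    have hfne : ((2*n+1).factorial : ℝ) ≠ 0 := Nat.cast_ne_zero.mpr (Nat.factorial_ne_zero _)
    rw [hf1, hf2]
    field_simp
    ring

lemma normP (n : ℕ) :
    ∫ x in (-1:ℝ)..1, eval x (P n) * eval x (P n) = 2/(2*(n:ℝ)+1) := by
  have hDP : derivative^[n] (P n) = C (((2:ℝ)^n * n.factorial)⁻¹ * ((2*n).factorial : ℝ)) := by
    rw [P, Polynomial.iterate_derivative_C_mul, ← Function.iterate_add_apply,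
      show n + n = 2*n by omega, iterate_derivative_W_self, ← C_mul]
  rw [int_P_mul, hDP]
  have : (fun x => eval x (W n) * eval x (C (((2:ℝ)^n * n.factorial)⁻¹ * ((2*n).factorial : ℝ))))
      = fun x => (((2:ℝ)^n * n.factorial)⁻¹ * ((2*n).factorial : ℝ)) * eval x (W n) := by
    funext x; simp; ring
  rw [intervalIntegral.integral_congr (fun x _ => congrFun this x),
    intervalIntegral.integral_const_mul,
    show (∫ x in (-1:ℝ)..1, eval x (W n)) = I n from rfl, I_formula]
  have h1 : ((2*n).factorial : ℝ) ≠ 0 := Nat.cast_ne_zero.mpr (Nat.factorial_ne_zero _)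
  have h2 : ((2*n+1).factorial : ℝ) = (2*(n:ℝ)+1) * ((2*n).factorial : ℝ) := by
    rw [Nat.factorial_succ]; push_cast; ring
  have h3 : (n.factorial : ℝ) ≠ 0 := Nat.cast_ne_zero.mpr (Nat.factorial_ne_zero _)
  have h4 : ((2:ℝ)^n) ≠ 0 := by positivity
  have h5 : (2*(n:ℝ)+1) ≠ 0 := by positivity
  have h6 : ((2:ℝ)^(2*n+1)) = 2 * ((2:ℝ)^n)^2 := by
    rw [pow_succ, ← pow_mul, mul_comm n 2]
    ring
  rw [h2, h6]
  field_simp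
  ring_nf
  rw [show ((-1:ℝ))^(n*2) = 1 by rw [mul_comm, pow_mul, neg_one_sq, one_pow]]


lemma P_coeff_ne (n : ℕ) : (P n).coeff n ≠ 0 := by
  rw [P, coeff_C_mul, coeff_iterate_derivative]
  have hW : (W n).coeff (n + n) = 1 := by
    have := (W_monic n).leadingCoeff
    rwa [leadingCoeff, natDegree_W, two_mul] at this
  rw [hW]
  have h1 : (0:ℝ) < ((n+n).descFactorial n : ℝ) := by
    have : (n+n).descFactorial n ≠ 0 := by
      rw [Ne, Nat.descFactorial_eq_zero_iff_lt]; omega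
    exact_mod_cast Nat.pos_of_ne_zero this
  have h2 : (0:ℝ) < ((2:ℝ)^n * n.factorial) := by positivity
  have : ((n+n).descFactorial n : ℕ) • (1:ℝ) = ((n+n).descFactorial n : ℝ) := by
    rw [nsmul_eq_mul, mul_one]
  rw [this]
  exact mul_ne_zero (inv_ne_zero (ne_of_gt h2)) (ne_of_gt h1)

lemma span (p : ℕ) : ∀ g : ℝ[X], g.natDegree ≤ p →
    ∃ c : ℕ → ℝ, g = ∑ k ∈ range (p+1), C (c k) * P k := by
  induction p with
  | zero =>
    intro g hg
    refine ⟨fun _ => g.coeff 0 / (P 0).coeff 0, ?_⟩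
    have h0 : P 0 = C ((P 0).coeff 0) :=
      Polynomial.eq_C_of_natDegree_le_zero (natDegree_P_le 0)
    rw [range_one, Finset.sum_singleton]
    nth_rewrite 2 [h0]
    rw [← C_mul, div_mul_cancel₀ _ (by simpa using P_coeff_ne 0)]
    exact Polynomial.eq_C_of_natDegree_le_zero hg
  | succ p ih =>
    intro g hg
    set d := g.coeff (p+1) / (P (p+1)).coeff (p+1) with hd
    have hsub : (g - C d * P (p+1)).natDegree ≤ p := by
      rw [natDegree_le_iff_coeff_eq_zero]
      intro m hm
      rw [coeff_sub, coeff_C_mul]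
      rcases eq_or_lt_of_le (Nat.succ_le_of_lt hm) with h | h
      · rw [← h, hd, div_mul_cancel₀ _ (P_coeff_ne (p+1)), sub_self]
      · rw [coeff_eq_zero_of_natDegree_lt (lt_of_le_of_lt hg h),
          coeff_eq_zero_of_natDegree_lt (lt_of_le_of_lt (natDegree_P_le (p+1)) h)]
        ring
    obtain ⟨c, hc⟩ := ih _ hsub
    refine ⟨fun k => if k = p+1 then d else c k, ?_⟩
    rw [Finset.sum_range_succ]
    have he : ∑ k ∈ range (p+1), C (if k = p+1 then d else c k) * P k
        = ∑ k ∈ range (p+1), C (c k) * P k := by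
      refine Finset.sum_congr rfl fun k hk => ?_
      have : k ≠ p+1 := by have := Finset.mem_range.mp hk; omega
      rw [if_neg this]
    have h2 : (if p+1 = p+1 then d else c (p+1)) = d := if_pos rfl
    rw [he]
    beta_reduce
    rw [h2, ← hc]
    ring


lemma orth' {m n : ℕ} (hmn : m ≠ n) :
    ∫ x in (-1:ℝ)..1, eval x (P n) * eval x (P m) = 0 := by
  rcases lt_or_gt_of_ne hmn with h | h
  · exact orth h
  · rw [intervalIntegral.integral_congr
      (fun x _ => mul_comm (eval x (P n)) (eval x (P m)))]
    exact orth h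

lemma parseval (m : ℕ) (c : ℕ → ℝ) :
    ∫ x in (-1:ℝ)..1, (eval x (∑ k ∈ range m, C (c k) * P k))^2
      = ∑ k ∈ range m, (c k)^2 * (2/(2*(k:ℝ)+1)) := by
  have hexp : ∀ x : ℝ, (eval x (∑ k ∈ range m, C (c k) * P k))^2
      = ∑ k ∈ range m, ∑ j ∈ range m, (c k * c j) * (eval x (P k) * eval x (P j)) := by
    intro x
    rw [eval_finset_sum, sq, Finset.sum_mul_sum]
    refine Finset.sum_congr rfl fun k _ => Finset.sum_congr rfl fun j _ => ?_
    simp only [eval_mul, eval_C]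
    ring
  rw [intervalIntegral.integral_congr (fun x _ => hexp x)]
  rw [intervalIntegral.integral_finset_sum (fun k _ => by
    apply Continuous.intervalIntegrable
    exact continuous_finset_sum _ fun j _ => continuous_const.mul
      ((P k).continuous.mul (P j).continuous))]
  refine Finset.sum_congr rfl fun k hk => ?_
  rw [intervalIntegral.integral_finset_sum (fun j _ => by
    apply Continuous.intervalIntegrable
    exact continuous_const.mul ((P k).continuous.mul (P j).continuous))]
  rw [Finset.sum_eq_single k]
  · rw [intervalIntegral.integral_const_mul, normP]
    ring
  · intro j _ hjk
    rw [intervalIntegral.integral_const_mul, orth' hjk]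
    ring
  · intro hk'; exact absurd hk hk'

lemma pointwiseCS (m : ℕ) (c : ℕ → ℝ) {s : ℝ} (hs : 1 ≤ s) :
    (eval s (∑ k ∈ range m, C (c k) * P k))^2
      ≤ (∑ k ∈ range m, (c k)^2 * (2/(2*(k:ℝ)+1)))
        * ∑ k ∈ range m, ((2*(k:ℝ)+1)/2) * ((s + Real.sqrt (s^2-1))^2)^k := by
  have hkpos : ∀ k : ℕ, (0:ℝ) < 2*(k:ℝ)+1 := fun k => by positivity
  have h1 : eval s (∑ k ∈ range m, C (c k) * P k)
      = ∑ k ∈ range m, (c k * Real.sqrt (2/(2*(k:ℝ)+1)))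
          * (Real.sqrt ((2*(k:ℝ)+1)/2) * eval s (P k)) := by
    rw [eval_finset_sum]
    refine Finset.sum_congr rfl fun k _ => ?_
    have hs1 : Real.sqrt (2/(2*(k:ℝ)+1)) * Real.sqrt ((2*(k:ℝ)+1)/2) = 1 := by
      rw [← Real.sqrt_mul (by positivity)]
      rw [show (2/(2*(k:ℝ)+1)) * ((2*(k:ℝ)+1)/2) = 1 by
        field_simp]
      exact Real.sqrt_one
    simp only [eval_mul, eval_C]
    calc c k * eval s (P k) = (c k * eval s (P k)) *
          (Real.sqrt (2/(2*(k:ℝ)+1)) * Real.sqrt ((2*(k:ℝ)+1)/2)) := by rw [hs1]; ring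
      _ = _ := by ring
  rw [h1]
  calc (∑ k ∈ range m, (c k * Real.sqrt (2/(2*(k:ℝ)+1)))
          * (Real.sqrt ((2*(k:ℝ)+1)/2) * eval s (P k)))^2
      ≤ (∑ k ∈ range m, (c k * Real.sqrt (2/(2*(k:ℝ)+1)))^2)
        * (∑ k ∈ range m, (Real.sqrt ((2*(k:ℝ)+1)/2) * eval s (P k))^2) :=
      Finset.sum_mul_sq_le_sq_mul_sq _ _ _
    _ ≤ _ := by
      have e1 : ∑ k ∈ range m, (c k * Real.sqrt (2/(2*(k:ℝ)+1)))^2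
          = ∑ k ∈ range m, (c k)^2 * (2/(2*(k:ℝ)+1)) := by
        refine Finset.sum_congr rfl fun k _ => ?_
        rw [mul_pow, Real.sq_sqrt (by positivity)]
      rw [e1]
      refine mul_le_mul_of_nonneg_left ?_ (Finset.sum_nonneg fun k _ => by positivity)
      refine Finset.sum_le_sum fun k _ => ?_
      rw [mul_pow, Real.sq_sqrt (le_of_lt (by positivity : (0:ℝ) < (2*(k:ℝ)+1)/2))]
      refine mul_le_mul_of_nonneg_left ?_ (by positivity)
      rw [← pow_mul, mul_comm 2 k, pow_mul]
      exact pow_le_pow_left₀ (P_eval_nonneg k hs) (P_eval_le k hs) 2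


lemma sum_bound (p : ℕ) {u : ℝ} (hu : 1 ≤ u) :
    ∑ k ∈ range (p+1), ((2*(k:ℝ)+1)/2) * (u^2)^k * ((1 - u⁻¹^2)/2)
      ≤ ((2*(p:ℝ)+1)/4) * u^(2*p) := by
  have hu0 : (0:ℝ) < u := lt_of_lt_of_le one_pos hu
  induction p with
  | zero =>
    rw [Finset.sum_range_one]
    norm_num
    nlinarith [inv_nonneg.mpr (sq_nonneg u)]
  | succ p ih =>
    rw [Finset.sum_range_succ]
    have h1 : (u^2)^(p+1) = u^(2*(p+1)) := by rw [← pow_mul]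
    have h2 : (u^2)^(p+1) * u⁻¹^2 = u^(2*p) := by
      rw [inv_pow, pow_succ, mul_assoc, mul_inv_cancel₀ (by positivity), mul_one, ← pow_mul]
    have hterm : ((2*((p+1:ℕ):ℝ)+1)/2) * (u^2)^(p+1) * ((1 - u⁻¹^2)/2)
        = ((2*((p:ℝ)+1)+1)/4) * (u^(2*(p+1)) - u^(2*p)) := by
      rw [← h1, ← h2]
      push_cast
      ring
    rw [hterm]
    have hp2 : (0:ℝ) ≤ u^(2*p) := by positivity
    have hmono : u^(2*p) ≤ u^(2*(p+1)) := pow_le_pow_right₀ hu (by omega)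
    push_cast
    nlinarith [ih]

lemma phi_sqrt {u : ℝ} (hu : 1 ≤ u) :
    (u + u⁻¹)/2 + Real.sqrt (((u + u⁻¹)/2)^2 - 1) = u := by
  have hu0 : (0:ℝ) < u := lt_of_lt_of_le one_pos hu
  have hinv : u⁻¹ ≤ 1 := by
    rw [inv_le_one_iff₀]; right; exact hu
  have h1 : ((u + u⁻¹)/2)^2 - 1 = ((u - u⁻¹)/2)^2 := by
    have : u * u⁻¹ = 1 := mul_inv_cancel₀ (ne_of_gt hu0)
    field_simp
    ring
  rw [h1, Real.sqrt_sq (by linarith)]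
  ring

lemma intH (p : ℕ) {lam : ℝ} (hlam : 1 ≤ lam) :
    ∫ s in (1:ℝ)..lam, (∑ k ∈ range (p+1),
        ((2*(k:ℝ)+1)/2) * ((s + Real.sqrt (s^2-1))^2)^k)
      ≤ (1/2) * ((lam + Real.sqrt (lam^2-1))^(2*p+1) - 1) := by
  set σ : ℝ := lam + Real.sqrt (lam^2-1) with hσdef
  have hlam2 : (0:ℝ) ≤ lam^2 - 1 := by nlinarith
  have hσ1 : 1 ≤ σ := by
    have := Real.sqrt_nonneg (lam^2-1); simp only [hσdef]; linarith
  have hσ0 : (0:ℝ) < σ := lt_of_lt_of_le one_pos hσ1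
  set φ : ℝ → ℝ := fun u => (u + u⁻¹)/2 with hφdef
  have hφ1 : φ 1 = 1 := by simp [hφdef]
  have hφσ : φ σ = lam := by
    have hmul : σ * (lam - Real.sqrt (lam^2-1)) = 1 := by
      have := Real.sq_sqrt hlam2
      simp only [hσdef]
      nlinarith
    have hinv : σ⁻¹ = lam - Real.sqrt (lam^2-1) := inv_eq_of_mul_eq_one_right hmul
    simp only [hφdef]
    rw [hinv, hσdef]
    ring
  have hHcont : Continuous (fun s : ℝ => ∑ k ∈ range (p+1),
      ((2*(k:ℝ)+1)/2) * ((s + Real.sqrt (s^2-1))^2)^k) := by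
    refine continuous_finset_sum _ fun k _ => ?_
    exact continuous_const.mul (((continuous_id.add
      ((Real.continuous_sqrt).comp (by continuity))).pow 2).pow k)
  have hφ'cont : ContinuousOn (fun u : ℝ => (1 - u⁻¹^2)/2) (Set.uIcc 1 σ) := by
    rw [Set.uIcc_of_le hσ1]
    refine ContinuousOn.div_const (continuous_const.continuousOn.sub ?_) 2
    refine ContinuousOn.pow ?_ 2
    exact ContinuousOn.inv₀ continuousOn_id fun x hx => by
      have := hx.1; intro h; rw [h] at this; linarith
  have hφderiv : ∀ x ∈ Set.uIcc (1:ℝ) σ, HasDerivAt φ ((1 - x⁻¹^2)/2) x := by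
    intro x hx
    rw [Set.uIcc_of_le hσ1] at hx
    have hx0 : x ≠ 0 := by
      have := hx.1; intro h; rw [h] at this; linarith
    have h1 : HasDerivAt (fun u : ℝ => u⁻¹) (-(x^2)⁻¹) x := hasDerivAt_inv hx0
    have h2 := ((hasDerivAt_id x).add h1).div_const 2
    exact h2.congr_deriv (by ring)
  have hsub := intervalIntegral.integral_comp_smul_deriv hφderiv hφ'cont hHcont
  rw [hφ1, hφσ] at hsub
  rw [← hsub]
  -- now bound ∫ u in 1..σ, φ' u • H (φ u)
  have hpt : ∀ u ∈ Set.Icc (1:ℝ) σ,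
      ((1 - u⁻¹^2)/2) • ((fun s : ℝ => ∑ k ∈ range (p+1),
        ((2*(k:ℝ)+1)/2) * ((s + Real.sqrt (s^2-1))^2)^k) ∘ φ) u
      ≤ ((2*(p:ℝ)+1)/4) * u^(2*p) := by
    intro u hu
    have hu1 : (1:ℝ) ≤ u := hu.1
    have hσφ : φ u + Real.sqrt ((φ u)^2 - 1) = u := phi_sqrt hu1
    simp only [Function.comp_apply, smul_eq_mul, hσφ]
    rw [Finset.mul_sum]
    refine le_trans (le_of_eq ?_) (sum_bound p hu1)
    exact Finset.sum_congr rfl fun k _ => by ring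
  have hi1 : IntervalIntegrable (fun x : ℝ =>
      ((1 - x⁻¹^2)/2) • ((fun s : ℝ => ∑ k ∈ range (p+1),
        ((2*(k:ℝ)+1)/2) * ((s + Real.sqrt (s^2-1))^2)^k) ∘ φ) x)
      MeasureTheory.volume 1 σ := by
    refine ContinuousOn.intervalIntegrable ?_
    refine ContinuousOn.smul hφ'cont ?_
    refine hHcont.comp_continuousOn ?_
    refine ContinuousOn.div_const (continuousOn_id.add ?_) 2
    rw [Set.uIcc_of_le hσ1]
    exact ContinuousOn.inv₀ continuousOn_id fun x hx => by
      have := hx.1; intro h; rw [h] at this; linarith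
  have hi2 : IntervalIntegrable (fun x : ℝ => ((2*(p:ℝ)+1)/4) * x^(2*p))
      MeasureTheory.volume 1 σ :=
    (continuous_const.mul (continuous_pow _)).intervalIntegrable _ _
  have hint := intervalIntegral.integral_mono_on hσ1 hi1 hi2 hpt
  refine le_trans hint ?_
  rw [intervalIntegral.integral_const_mul, integral_pow, one_pow]
  have h1p : (1:ℝ) ≤ σ^(2*p+1) := one_le_pow₀ hσ1
  have hc : ((2*p : ℕ):ℝ) + 1 = 2*(p:ℝ)+1 := by push_cast; ring
  rw [hc]
  have hd : (0:ℝ) < 2*(p:ℝ)+1 := by positivity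
  have heq : ((2*(p:ℝ)+1)/4) * ((σ^(2*p+1) - 1)/(2*(p:ℝ)+1))
      = (σ^(2*p+1) - 1)/4 := by
    field_simp
  rw [heq]
  linarith


theorem core (p : ℕ) {lam : ℝ} (hlam : 1 ≤ lam) (g : ℝ[X]) (hg : g.natDegree ≤ p) :
    (∫ s in (1:ℝ)..lam, (eval s g)^2)
      ≤ (1/2) * ((lam + Real.sqrt (lam^2-1))^(2*p+1) - 1)
          * ∫ x in (-1:ℝ)..1, (eval x g)^2 := by
  obtain ⟨c, hc⟩ := span p g hg
  set A : ℝ := ∑ k ∈ range (p+1), (c k)^2 * (2/(2*(k:ℝ)+1)) with hAdef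
  have hA : (∫ x in (-1:ℝ)..1, (eval x g)^2) = A := by rw [hc]; exact parseval (p+1) c
  have hA0 : 0 ≤ A := Finset.sum_nonneg fun k _ => by positivity
  have hHcont : Continuous (fun s : ℝ => ∑ k ∈ range (p+1),
      ((2*(k:ℝ)+1)/2) * ((s + Real.sqrt (s^2-1))^2)^k) := by
    refine continuous_finset_sum _ fun k _ => ?_
    exact continuous_const.mul (((continuous_id.add
      ((Real.continuous_sqrt).comp (by continuity))).pow 2).pow k)
  have step1 : (∫ s in (1:ℝ)..lam, (eval s g)^2)
      ≤ ∫ s in (1:ℝ)..lam, A * (∑ k ∈ range (p+1),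
          ((2*(k:ℝ)+1)/2) * ((s + Real.sqrt (s^2-1))^2)^k) := by
    refine intervalIntegral.integral_mono_on hlam
      ((g.continuous.pow 2).intervalIntegrable _ _)
      ((continuous_const.mul hHcont).intervalIntegrable _ _) ?_
    intro s hs
    rw [hc]
    exact pointwiseCS (p+1) c hs.1
  rw [intervalIntegral.integral_const_mul] at step1
  refine le_trans step1 ?_
  rw [hA]
  have := mul_le_mul_of_nonneg_left (intH p hlam) hA0
  linarith [this]

end DomInv
end DomInvSection


open Polynomial intervalIntegral in
/-- Scaled one-dimensional domain inverse estimate: for `a < b < c`, `t₀ = (a+b)/2`,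
`λ = (c−t₀)/(b−t₀)` and any polynomial `g` of degree at most `p`,
`∫_b^c g² ≤ (1/2)[(λ + √(λ²−1))^{2p+1} − 1] ∫_a^b g²`. -/
theorem domain_inverse_estimate_1d_scaled (p : ℕ) (a b c : ℝ) (hab : a < b) (hbc : b < c)
    (g : Polynomial ℝ) (hg : g.natDegree ≤ p) :
    (∫ t in b..c, (g.eval t) ^ 2) ≤
      (1 / 2) *
        (((c - (a + b) / 2) / (b - (a + b) / 2) +
            Real.sqrt (((c - (a + b) / 2) / (b - (a + b) / 2)) ^ 2 - 1)) ^ (2 * p + 1) - 1) *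
        ∫ t in a..b, (g.eval t) ^ 2 := by
  set t0 : ℝ := (a + b) / 2 with ht0
  set h : ℝ := (b - a) / 2 with hh
  have hh0 : 0 < h := by rw [hh]; linarith
  have hbt0 : b - t0 = h := by rw [ht0, hh]; ring
  set lam : ℝ := (c - t0) / (b - t0) with hlam
  have hlam1 : 1 < lam := by
    rw [hlam, hbt0]
    rw [lt_div_iff₀ hh0]
    rw [ht0, hh] at *
    linarith
  set gg : ℝ[X] := g.comp (C h * X + C t0) with hgg
  have hggdeg : gg.natDegree ≤ p := by
    rw [hgg, natDegree_comp, natDegree_linear (ne_of_gt hh0), mul_one]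
    exact hg
  have hggeval : ∀ s : ℝ, eval s gg = eval (h * s + t0) g := by
    intro s; rw [hgg, eval_comp]; simp
  -- change of variables
  have cov : ∀ u v : ℝ, (∫ s in u..v, (eval s gg)^2)
      = h⁻¹ * ∫ t in (h*u+t0)..(h*v+t0), (eval t g)^2 := by
    intro u v
    have := intervalIntegral.integral_comp_mul_add (a := u) (b := v)
      (f := fun t => (eval t g)^2) (ne_of_gt hh0) t0
    rw [← smul_eq_mul, ← this]
    exact intervalIntegral.integral_congr fun s _ => by rw [hggeval s]
  have hc1 : h * 1 + t0 = b := by rw [hh, ht0]; ring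
  have hcm1 : h * (-1) + t0 = a := by rw [hh, ht0]; ring
  have hclam : h * lam + t0 = c := by
    rw [hlam, hbt0]
    field_simp
    ring
  have e1 : (∫ t in b..c, (eval t g)^2) = h * ∫ s in (1:ℝ)..lam, (eval s gg)^2 := by
    rw [cov, hc1, hclam, ← mul_assoc, mul_inv_cancel₀ (ne_of_gt hh0), one_mul]
  have e2 : (∫ t in a..b, (eval t g)^2) = h * ∫ s in (-1:ℝ)..1, (eval s gg)^2 := by
    rw [cov, hcm1, hc1, ← mul_assoc, mul_inv_cancel₀ (ne_of_gt hh0), one_mul]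
  have hcore := DomInv.core p (le_of_lt hlam1) gg hggdeg
  calc (∫ t in b..c, (eval t g)^2) = h * ∫ s in (1:ℝ)..lam, (eval s gg)^2 := e1
    _ ≤ h * ((1/2) * ((lam + Real.sqrt (lam^2-1))^(2*p+1) - 1)
          * ∫ x in (-1:ℝ)..1, (eval x gg)^2) :=
        mul_le_mul_of_nonneg_left hcore (le_of_lt hh0)
    _ = (1/2) * ((lam + Real.sqrt (lam^2-1))^(2*p+1) - 1)
          * (h * ∫ x in (-1:ℝ)..1, (eval x gg)^2) := by ring
    _ = _ := by rw [← e2, hlam, hbt0, ht0]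
end

section
/- Let (a,b) ⊂ ℝ be a bounded interval and v ∈ H¹(a,b). Then the Aronszajn–Slobodeckij seminorm satisfies |v|_{H^{1/2}(a,b)} ≤ C ‖v‖_{L²(a,b)}^{1/2} ‖v'‖_{L²(a,b)}^{1/2} for a constant C independent of the interval (a,b) and of v. -/
/-!
By symmetry the double integral is twice the integral over `y < x`, and the substitution
`y = x - h` turns it into `∫_{h > 0} h⁻² ∫ (v x - v (x - h))² dx`. Writing
`v x - v (x - h) = ∫_{x-h}^x v'`, Cauchy–Schwarz bounds the inner integral by `h² ‖v'‖²`; it is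
also trivially at most `4 ‖v‖²`. Using the first bound for `h ≤ δ` and the second for `h > δ`
gives `|v|² ≤ 2 δ ‖v'‖² + 8 ‖v‖² / δ`, and optimizing in `δ` gives `|v|² ≤ 8 ‖v‖ ‖v'‖`.
-/

open MeasureTheory Set Function Filter Topology
open scoped ENNReal

theorem sq_lintegral_le_measure_mul_lintegral_sq {α : Type*} [MeasurableSpace α] (μ : Measure α)
    {f : α → ℝ≥0∞} (hf : AEMeasurable f μ) :
    (∫⁻ a, f a ∂μ) ^ 2 ≤ μ univ * ∫⁻ a, f a ^ 2 ∂μ := by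
  have h := ENNReal.lintegral_mul_le_Lp_mul_Lq μ Real.HolderConjugate.two_two
    (aemeasurable_const (b := 1)) hf
  simp only [Pi.mul_apply, one_mul, ENNReal.one_rpow, lintegral_const] at h
  calc (∫⁻ a, f a ∂μ) ^ 2
      ≤ ((μ univ) ^ (1 / 2 : ℝ) * (∫⁻ a, f a ^ (2 : ℝ) ∂μ) ^ (1 / 2 : ℝ)) ^ 2 := by gcongr
    _ = μ univ * ∫⁻ a, f a ^ 2 ∂μ := by
        rw [mul_pow, ← ENNReal.rpow_natCast, ← ENNReal.rpow_natCast, ← ENNReal.rpow_mul,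
          ← ENNReal.rpow_mul]
        norm_num

theorem ofReal_sq_intervalIntegral_le {w : ℝ → ℝ} (hw : Measurable w) {y x : ℝ} (hyx : y ≤ x) :
    ENNReal.ofReal ((∫ s in y..x, w s) ^ 2) ≤
      ENNReal.ofReal (x - y) * ∫⁻ s in Ioc y x, ENNReal.ofReal (w s ^ 2) := by
  have hsq : ∀ c : ℝ, ENNReal.ofReal (c ^ 2) = ‖c‖ₑ ^ 2 := fun c => by
    rw [Real.enorm_eq_ofReal_abs, ← ENNReal.ofReal_pow (abs_nonneg c), sq_abs]
  simp_rw [hsq]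
  calc ‖∫ s in y..x, w s‖ₑ ^ 2 ≤ (∫⁻ s in Ioc y x, ‖w s‖ₑ) ^ 2 := by
        rw [intervalIntegral.integral_of_le hyx]
        gcongr
        exact enorm_integral_le_lintegral_enorm _
    _ ≤ ENNReal.ofReal (x - y) * ∫⁻ s in Ioc y x, ‖w s‖ₑ ^ 2 := by
        simpa [Real.volume_Ioc] using sq_lintegral_le_measure_mul_lintegral_sq
          (volume.restrict (Ioc y x)) hw.enorm.aemeasurable

theorem ofReal_sub_sq_le (p q : ℝ) :
    ENNReal.ofReal ((p - q) ^ 2) ≤ 2 * ENNReal.ofReal (p ^ 2) + 2 * ENNReal.ofReal (q ^ 2) := by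
  rw [← ENNReal.ofReal_ofNat 2, ← ENNReal.ofReal_mul zero_le_two, ← ENNReal.ofReal_mul zero_le_two,
    ← ENNReal.ofReal_add (by positivity) (by positivity)]
  exact ENNReal.ofReal_le_ofReal (by nlinarith [sq_nonneg (p + q)])

theorem lintegral_setLIntegral_Ioc_sub {g : ℝ → ℝ≥0∞} (hg : Measurable g) (h : ℝ) :
    ∫⁻ x, ∫⁻ s in Ioc (x - h) x, g s = ENNReal.ofReal h * ∫⁻ s, g s := by
  have hmeas : Measurable (uncurry fun x s => (Ioc (x - h) x).indicator g s) := by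
    refine Measurable.ite ?_ (hg.comp measurable_snd) measurable_const
    exact (measurableSet_lt (measurable_fst.sub_const h) measurable_snd).inter
      (measurableSet_le measurable_snd measurable_fst)
  calc ∫⁻ x, ∫⁻ s in Ioc (x - h) x, g s
      = ∫⁻ s, ∫⁻ x, (Ico s (s + h)).indicator (fun _ => g s) x := by
        simp_rw [← lintegral_indicator measurableSet_Ioc]
        rw [lintegral_lintegral_swap hmeas.aemeasurable]
        congr 1 with s; congr 1 with x
        simp only [indicator, mem_Ioc, mem_Ico, sub_lt_iff_lt_add']
        grind
    _ = ENNReal.ofReal h * ∫⁻ s, g s := by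
        simp_rw [lintegral_indicator_const measurableSet_Ico, Real.volume_Ico, add_sub_cancel_left]
        rw [lintegral_mul_const _ hg, mul_comm]

theorem lintegral_setLIntegral_Iio_eq_setLIntegral_Ioi_sub {μ : Measure ℝ} [SFinite μ] {f : ℝ → ℝ → ℝ≥0∞}
    (hf : Measurable (uncurry f)) :
    ∫⁻ x, (∫⁻ y in Iio x, f x y) ∂μ = ∫⁻ h in Ioi 0, ∫⁻ x, f x (x - h) ∂μ := by
  have hmeas : Measurable (uncurry fun x h => (Ioi 0).indicator (fun h => f x (x - h)) h) := by
    refine Measurable.ite (measurableSet_Ioi.preimage measurable_snd) ?_ measurable_const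
    exact hf.comp (measurable_fst.prodMk (measurable_fst.sub measurable_snd))
  calc ∫⁻ x, (∫⁻ y in Iio x, f x y) ∂μ
      = ∫⁻ x, (∫⁻ h, (Ioi 0).indicator (fun h => f x (x - h)) h) ∂μ := by
        refine lintegral_congr fun x => ?_
        rw [← lintegral_indicator measurableSet_Iio, ← lintegral_sub_left_eq_self _ x]
        congr 1 with h
        by_cases h0 : 0 < h <;> simp [indicator, h0]
    _ = ∫⁻ h, (Ioi 0).indicator (fun h => ∫⁻ x, f x (x - h) ∂μ) h := by
        rw [lintegral_lintegral_swap hmeas.aemeasurable]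
        congr 1 with h
        by_cases h0 : 0 < h <;> simp [indicator, h0]
    _ = ∫⁻ h in Ioi 0, ∫⁻ x, f x (x - h) ∂μ := lintegral_indicator measurableSet_Ioi _

theorem lintegral_lintegral_eq_two_mul_of_symm {μ : Measure ℝ} [SFinite μ] [NullSingletonClass μ]
    {F : ℝ → ℝ → ℝ≥0∞} (hF : Measurable (uncurry F)) (hsymm : ∀ x y, F x y = F y x) :
    ∫⁻ x, ∫⁻ y, F x y ∂μ ∂μ = 2 * ∫⁻ x, ∫⁻ y in Iio x, F x y ∂μ ∂μ := by
  have hlt : Measurable (uncurry fun x y => (Ioi x).indicator (F x) y) :=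
    Measurable.ite (measurableSet_lt measurable_fst measurable_snd) hF measurable_const
  have hIio : Measurable fun x => ∫⁻ y in Iio x, F x y ∂μ := by
    simp_rw [← lintegral_indicator measurableSet_Iio]
    exact (Measurable.ite (measurableSet_lt measurable_snd measurable_fst) hF
      measurable_const).lintegral_prod_right
  have hsplit : ∀ x, ∫⁻ y, F x y ∂μ = ∫⁻ y in Iio x, F x y ∂μ + ∫⁻ y in Ioi x, F x y ∂μ := by
    intro x
    rw [← lintegral_add_compl (F x) measurableSet_Iio, compl_Iio,
      Measure.restrict_congr_set Ioi_ae_eq_Ici]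
  have hswap : ∫⁻ x, ∫⁻ y in Ioi x, F x y ∂μ ∂μ = ∫⁻ x, ∫⁻ y in Iio x, F x y ∂μ ∂μ := by
    calc ∫⁻ x, ∫⁻ y in Ioi x, F x y ∂μ ∂μ
        = ∫⁻ y, ∫⁻ x, (Ioi x).indicator (F x) y ∂μ ∂μ := by
          simp_rw [← lintegral_indicator measurableSet_Ioi]
          exact lintegral_lintegral_swap hlt.aemeasurable
      _ = ∫⁻ y, ∫⁻ x in Iio y, F y x ∂μ ∂μ := by
          refine lintegral_congr fun y => ?_
          rw [← lintegral_indicator measurableSet_Iio]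
          congr 1 with x
          by_cases hxy : x < y <;> simp [indicator, hxy, hsymm x y]
  rw [lintegral_congr hsplit, lintegral_add_left hIio, hswap, two_mul]

theorem setLIntegral_Ioi_inv_sq {δ : ℝ} (hδ : 0 < δ) :
    ∫⁻ h in Ioi δ, ENNReal.ofReal (h ^ 2)⁻¹ = ENNReal.ofReal δ⁻¹ := by
  have hpow : ∀ h ∈ Ioi δ, (h ^ 2)⁻¹ = h ^ (-2 : ℝ) := fun h hh => by
    rw [Real.rpow_neg (hδ.trans hh).le]; norm_cast
  rw [setLIntegral_congr_fun measurableSet_Ioi fun h hh => by rw [hpow h hh],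
    ← ofReal_integral_eq_lintegral_ofReal (integrableOn_Ioi_rpow_of_lt (by norm_num) hδ)
      ((ae_restrict_iff' measurableSet_Ioi).2 (.of_forall fun h hh =>
        Real.rpow_nonneg (hδ.trans hh).le _)),
    integral_Ioi_rpow_of_lt (by norm_num) hδ]
  norm_num [Real.rpow_neg_one]

theorem setLIntegral_Ioi_le_of_le_of_le_inv_sq {φ : ℝ → ℝ≥0∞} {A B : ℝ≥0∞} {δ : ℝ} (hδ : 0 < δ)
    (hnear : ∀ h ∈ Ioc 0 δ, φ h ≤ B) (hfar : ∀ h ∈ Ioi δ, φ h ≤ A * ENNReal.ofReal (h ^ 2)⁻¹) :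
    ∫⁻ h in Ioi 0, φ h ≤ ENNReal.ofReal δ * B + A * ENNReal.ofReal δ⁻¹ := by
  rw [← Ioc_union_Ioi_eq_Ioi hδ.le]
  calc ∫⁻ h in Ioc 0 δ ∪ Ioi δ, φ h ≤ (∫⁻ h in Ioc 0 δ, φ h) + ∫⁻ h in Ioi δ, φ h :=
        lintegral_union_le _ _ _
    _ ≤ (∫⁻ _ in Ioc 0 δ, B) + ∫⁻ h in Ioi δ, A * ENNReal.ofReal (h ^ 2)⁻¹ :=
        add_le_add (setLIntegral_mono' measurableSet_Ioc hnear)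
          (setLIntegral_mono' measurableSet_Ioi hfar)
    _ = ENNReal.ofReal δ * B + A * ENNReal.ofReal δ⁻¹ := by
        rw [setLIntegral_const, Real.volume_Ioc, sub_zero, mul_comm,
          lintegral_const_mul A (by fun_prop), setLIntegral_Ioi_inv_sq hδ]

theorem integral_integral_le_of_lintegral_lintegral_le {α β : Type*} [MeasurableSpace α]
    [MeasurableSpace β] {μ : Measure α} {ν : Measure β} [SFinite ν] {f : α → β → ℝ}
    (hf : StronglyMeasurable (uncurry f)) (hf0 : ∀ x y, 0 ≤ f x y) {c : ℝ} (hc : 0 ≤ c)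
    (h : ∫⁻ x, ∫⁻ y, ENNReal.ofReal (f x y) ∂ν ∂μ ≤ ENNReal.ofReal c) :
    ∫ x, ∫ y, f x y ∂ν ∂μ ≤ c := by
  rw [integral_eq_lintegral_of_nonneg_ae (.of_forall fun x => integral_nonneg (hf0 x))
    hf.integral_prod_right.aestronglyMeasurable]
  refine ENNReal.toReal_le_of_le_ofReal hc (le_trans (lintegral_mono fun x => ?_) h)
  rw [integral_eq_lintegral_of_nonneg_ae (.of_forall (hf0 x))
    (hf.comp_measurable measurable_prodMk_left).aestronglyMeasurable]
  exact ENNReal.ofReal_toReal_le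

theorem le_two_mul_sqrt_mul_sqrt_of_forall_le {I A B : ℝ} (hA : 0 ≤ A) (hB : 0 ≤ B)
    (h : ∀ δ > 0, I ≤ δ * B + A / δ) : I ≤ 2 * √A * √B := by
  have hε : ∀ ε > 0, I ≤ 2 * √(A + ε) * √(B + ε) := by
    intro ε hε
    have hA' : 0 < √(A + ε) := Real.sqrt_pos.2 (by linarith)
    have hB' : 0 < √(B + ε) := Real.sqrt_pos.2 (by linarith)
    calc I ≤ √(A + ε) / √(B + ε) * B + A / (√(A + ε) / √(B + ε)) := h _ (div_pos hA' hB')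
      _ ≤ √(A + ε) / √(B + ε) * (B + ε) + (A + ε) / (√(A + ε) / √(B + ε)) := by
          gcongr <;> linarith
      _ = 2 * √(A + ε) * √(B + ε) := by
          field_simp
          rw [Real.sq_sqrt (by linarith), Real.sq_sqrt (by linarith)]
          ring
  have hlim : Tendsto (fun ε => 2 * √(A + ε) * √(B + ε)) (𝓝[>] 0) (𝓝 (2 * √A * √B)) := by
    have hc : Continuous fun ε => 2 * √(A + ε) * √(B + ε) := by fun_prop
    simpa using (hc.tendsto 0).mono_left nhdsWithin_le_nhds
  exact ge_of_tendsto hlim (eventually_nhdsWithin_of_forall hε)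

noncomputable def slobodeckijKernel (u : ℝ → ℝ) (x y : ℝ) : ℝ≥0∞ :=
  ENNReal.ofReal ((u x - u y) ^ 2 / |x - y| ^ 2)

namespace slobodeckijKernel

variable {u w : ℝ → ℝ} {T : Set ℝ}

theorem comm (u : ℝ → ℝ) (x y : ℝ) : slobodeckijKernel u x y = slobodeckijKernel u y x := by
  rw [slobodeckijKernel, slobodeckijKernel, abs_sub_comm, ← neg_sub (u x), neg_sq]

theorem measurable (hu : Measurable u) : Measurable (uncurry (slobodeckijKernel u)) := by
  unfold slobodeckijKernel uncurry; fun_prop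

theorem apply_sub (u : ℝ → ℝ) (x : ℝ) {h : ℝ} (hh : 0 < h) :
    slobodeckijKernel u x (x - h) =
      ENNReal.ofReal ((u x - u (x - h)) ^ 2) * ENNReal.ofReal (h ^ 2)⁻¹ := by
  rw [slobodeckijKernel, sub_sub_cancel, abs_of_pos hh, div_eq_mul_inv,
    ENNReal.ofReal_mul (sq_nonneg _)]

theorem setLIntegral_sub_le_of_ftc (hT : T.OrdConnected) (hw : Measurable w)
    (hftc : ∀ x ∈ T, ∀ y ∈ T, y ≤ x → u x - u y = ∫ s in y..x, w s) {h : ℝ} (hh : 0 < h) :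
    ∫⁻ x in T, T.indicator (slobodeckijKernel u x) (x - h) ≤
      ∫⁻ s in T, ENNReal.ofReal (w s ^ 2) := by
  set G : ℝ → ℝ≥0∞ := T.indicator fun s => ENNReal.ofReal (w s ^ 2)
  have hpt : ∀ x ∈ T, T.indicator (slobodeckijKernel u x) (x - h) ≤
      ENNReal.ofReal h⁻¹ * ∫⁻ s in Ioc (x - h) x, G s := by
    intro x hx
    by_cases hxh : x - h ∈ T
    · have hG : ∫⁻ s in Ioc (x - h) x, ENNReal.ofReal (w s ^ 2) = ∫⁻ s in Ioc (x - h) x, G s :=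
        setLIntegral_congr_fun measurableSet_Ioc fun s hs =>
          (indicator_of_mem (hT.out hxh hx (Ioc_subset_Icc_self hs))
            fun s => ENNReal.ofReal (w s ^ 2)).symm
      calc T.indicator (slobodeckijKernel u x) (x - h)
          = ENNReal.ofReal ((∫ s in x - h..x, w s) ^ 2) * ENNReal.ofReal (h ^ 2)⁻¹ := by
            rw [indicator_of_mem hxh, apply_sub u x hh, hftc x hx _ hxh (by linarith)]
        _ ≤ ENNReal.ofReal h * (∫⁻ s in Ioc (x - h) x, G s) * ENNReal.ofReal (h ^ 2)⁻¹ := by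
            gcongr
            simpa [hG] using ofReal_sq_intervalIntegral_le hw (sub_le_self x hh.le)
        _ = ENNReal.ofReal h⁻¹ * ∫⁻ s in Ioc (x - h) x, G s := by
            rw [mul_right_comm, ← ENNReal.ofReal_mul hh.le]
            congr 2
            field_simp
    · simp [indicator_of_notMem hxh]
  calc ∫⁻ x in T, T.indicator (slobodeckijKernel u x) (x - h)
      ≤ ∫⁻ x in T, ENNReal.ofReal h⁻¹ * ∫⁻ s in Ioc (x - h) x, G s :=
        setLIntegral_mono' hT.measurableSet hpt
    _ ≤ ∫⁻ x, ENNReal.ofReal h⁻¹ * ∫⁻ s in Ioc (x - h) x, G s := setLIntegral_le_lintegral _ _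
    _ = ∫⁻ s in T, ENNReal.ofReal (w s ^ 2) := by
        have hGm : Measurable G := (by fun_prop : Measurable _).indicator hT.measurableSet
        rw [lintegral_const_mul' _ _ ENNReal.ofReal_ne_top, lintegral_setLIntegral_Ioc_sub hGm,
          ← mul_assoc, ← ENNReal.ofReal_mul (inv_nonneg.2 hh.le), inv_mul_cancel₀ hh.ne',
          ENNReal.ofReal_one, one_mul, lintegral_indicator hT.measurableSet]

theorem setLIntegral_sub_le_mul_inv_sq (hT : MeasurableSet T) (hu : Measurable u) {h : ℝ}
    (hh : 0 < h) :
    ∫⁻ x in T, T.indicator (slobodeckijKernel u x) (x - h) ≤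
      4 * (∫⁻ s in T, ENNReal.ofReal (u s ^ 2)) * ENNReal.ofReal (h ^ 2)⁻¹ := by
  set U : ℝ → ℝ≥0∞ := T.indicator fun s => ENNReal.ofReal (u s ^ 2)
  have hUm : Measurable U := (by fun_prop : Measurable _).indicator hT
  have hpt : ∀ x ∈ T, T.indicator (slobodeckijKernel u x) (x - h) ≤
      (2 * U x + 2 * U (x - h)) * ENNReal.ofReal (h ^ 2)⁻¹ := by
    intro x hx
    by_cases hxh : x - h ∈ T
    · rw [indicator_of_mem hxh, apply_sub u x hh]
      simp only [U, indicator_of_mem hx, indicator_of_mem hxh]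
      gcongr
      exact ofReal_sub_sq_le _ _
    · simp [indicator_of_notMem hxh]
  calc ∫⁻ x in T, T.indicator (slobodeckijKernel u x) (x - h)
      ≤ ∫⁻ x in T, (2 * U x + 2 * U (x - h)) * ENNReal.ofReal (h ^ 2)⁻¹ :=
        setLIntegral_mono' hT hpt
    _ ≤ (∫⁻ x, (2 * U x + 2 * U (x - h))) * ENNReal.ofReal (h ^ 2)⁻¹ := by
        rw [← lintegral_mul_const _ (by fun_prop)]
        exact setLIntegral_le_lintegral _ _
    _ = 4 * (∫⁻ s in T, ENNReal.ofReal (u s ^ 2)) * ENNReal.ofReal (h ^ 2)⁻¹ := by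
        rw [lintegral_add_left (by fun_prop), lintegral_const_mul _ hUm,
          lintegral_const_mul _ (by fun_prop), lintegral_sub_right_eq_self U h,
          lintegral_indicator hT]
        ring

theorem setLIntegral_setLIntegral_le (hT : T.OrdConnected) (hu : Measurable u)
    (hw : Measurable w) (hftc : ∀ x ∈ T, ∀ y ∈ T, y ≤ x → u x - u y = ∫ s in y..x, w s)
    {δ : ℝ} (hδ : 0 < δ) :
    ∫⁻ x in T, ∫⁻ y in T, slobodeckijKernel u x y ≤
      2 * (ENNReal.ofReal δ * (∫⁻ s in T, ENNReal.ofReal (w s ^ 2)) +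
        4 * (∫⁻ s in T, ENNReal.ofReal (u s ^ 2)) * ENNReal.ofReal δ⁻¹) := by
  have hKT : Measurable (uncurry fun x y => T.indicator (slobodeckijKernel u x) y) :=
    (measurable hu).indicator (measurable_snd hT.measurableSet)
  rw [lintegral_lintegral_eq_two_mul_of_symm (measurable hu) (comm u)]
  gcongr 2 * ?_
  calc ∫⁻ x in T, ∫⁻ y in Iio x, slobodeckijKernel u x y ∂volume.restrict T
      = ∫⁻ x in T, ∫⁻ y in Iio x, T.indicator (slobodeckijKernel u x) y := by
        refine lintegral_congr fun x => ?_
        rw [Measure.restrict_comm measurableSet_Iio, lintegral_indicator hT.measurableSet]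
    _ = ∫⁻ h in Ioi 0, ∫⁻ x in T, T.indicator (slobodeckijKernel u x) (x - h) :=
        lintegral_setLIntegral_Iio_eq_setLIntegral_Ioi_sub hKT
    _ ≤ ENNReal.ofReal δ * (∫⁻ s in T, ENNReal.ofReal (w s ^ 2)) +
          4 * (∫⁻ s in T, ENNReal.ofReal (u s ^ 2)) * ENNReal.ofReal δ⁻¹ :=
      setLIntegral_Ioi_le_of_le_of_le_inv_sq hδ
        (fun h hh => setLIntegral_sub_le_of_ftc hT hw hftc hh.1)
        (fun h hh => setLIntegral_sub_le_mul_inv_sq hT.measurableSet hu (hδ.trans hh))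

end slobodeckijKernel

theorem ofReal_setIntegral_Ioc_sq {u : ℝ → ℝ} (hu : Continuous u) (a b : ℝ) :
    ENNReal.ofReal (∫ x in Ioc a b, u x ^ 2) = ∫⁻ x in Ioc a b, ENNReal.ofReal (u x ^ 2) :=
  ofReal_integral_eq_lintegral_ofReal (hu.pow 2).integrableOn_Ioc (.of_forall fun _ => sq_nonneg _)

theorem intervalIntegral_slobodeckij_le_of_ftc {a b : ℝ} (hab : a ≤ b) {u w : ℝ → ℝ}
    (hu : Continuous u) (hw : Continuous w)
    (hftc : ∀ x ∈ Icc a b, ∀ y ∈ Icc a b, y ≤ x → u x - u y = ∫ s in y..x, w s) :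
    ∫ x in a..b, ∫ y in a..b, (u x - u y) ^ 2 / |x - y| ^ 2 ≤
      8 * √(∫ x in a..b, u x ^ 2) * √(∫ x in a..b, w x ^ 2) := by
  simp_rw [intervalIntegral.integral_of_le hab]
  set A := ∫ x in Ioc a b, u x ^ 2
  set B := ∫ x in Ioc a b, w x ^ 2
  have hA : 0 ≤ A := integral_nonneg fun _ => sq_nonneg _
  have hB : 0 ≤ B := integral_nonneg fun _ => sq_nonneg _
  have hδ : ∀ δ > 0, ∫ x in Ioc a b, ∫ y in Ioc a b, (u x - u y) ^ 2 / |x - y| ^ 2 ≤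
      δ * (2 * B) + 8 * A / δ := by
    intro δ hδ
    refine integral_integral_le_of_lintegral_lintegral_le
      (f := fun x y => (u x - u y) ^ 2 / |x - y| ^ 2)
      (by unfold uncurry; fun_prop) (fun _ _ => by positivity) (by positivity) ?_
    refine (slobodeckijKernel.setLIntegral_setLIntegral_le ordConnected_Ioc hu.measurable
      hw.measurable (fun x hx y hy => hftc x (Ioc_subset_Icc_self hx) y (Ioc_subset_Icc_self hy))
      hδ).trans_eq ?_
    rw [← ofReal_setIntegral_Ioc_sq hu, ← ofReal_setIntegral_Ioc_sq hw, ← ENNReal.ofReal_ofNat 2,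
      ← ENNReal.ofReal_ofNat 4, ← ENNReal.ofReal_mul hδ.le, ← ENNReal.ofReal_mul zero_le_four,
      ← ENNReal.ofReal_mul (by positivity), ← ENNReal.ofReal_add (by positivity) (by positivity),
      ← ENNReal.ofReal_mul zero_le_two]
    congr 1
    ring
  calc _ ≤ 2 * √(8 * A) * √(2 * B) :=
        le_two_mul_sqrt_mul_sqrt_of_forall_le (by positivity) (by positivity) hδ
    _ = 2 * √(8 * 2) * √A * √B := by
        rw [Real.sqrt_mul (by norm_num), Real.sqrt_mul (by norm_num), Real.sqrt_mul (by norm_num)]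
        ring
    _ = 8 * √A * √B := by
        rw [show (8 : ℝ) * 2 = 4 ^ 2 by norm_num, Real.sqrt_sq (by norm_num)]
        ring

theorem intervalIntegral_slobodeckij_le_of_hasDerivAt {a b : ℝ} (hab : a ≤ b) {v v' : ℝ → ℝ}
    (hderiv : ∀ x ∈ Icc a b, HasDerivAt v (v' x) x) (hcont : ContinuousOn v' (Icc a b)) :
    ∫ x in a..b, ∫ y in a..b, (v x - v y) ^ 2 / |x - y| ^ 2 ≤
      8 * √(∫ x in a..b, v x ^ 2) * √(∫ x in a..b, v' x ^ 2) := by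
  set u := IccExtend hab ((Icc a b).domRestrict v)
  set w := IccExtend hab ((Icc a b).domRestrict v')
  have hv : ContinuousOn v (Icc a b) := fun x hx => (hderiv x hx).continuousAt.continuousWithinAt
  have hu : EqOn u v (uIcc a b) := fun x hx => IccExtend_of_mem _ _ (uIcc_of_le hab ▸ hx)
  have hw : EqOn w v' (uIcc a b) := fun x hx => IccExtend_of_mem _ _ (uIcc_of_le hab ▸ hx)
  have hftc : ∀ x ∈ Icc a b, ∀ y ∈ Icc a b, y ≤ x → u x - u y = ∫ s in y..x, w s := by
    intro x hx y hy _
    have hsub : uIcc y x ⊆ Icc a b := uIcc_subset_Icc hy hx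
    rw [hu (Icc_subset_uIcc hx), hu (Icc_subset_uIcc hy),
      intervalIntegral.integral_congr (hw.mono (hsub.trans Icc_subset_uIcc)),
      intervalIntegral.integral_eq_sub_of_hasDerivAt (fun t ht => hderiv t (hsub ht))
        (hcont.mono hsub).intervalIntegrable]
  have hI : (∫ x in a..b, ∫ y in a..b, (v x - v y) ^ 2 / |x - y| ^ 2) =
      ∫ x in a..b, ∫ y in a..b, (u x - u y) ^ 2 / |x - y| ^ 2 :=
    intervalIntegral.integral_congr fun x hx =>
      intervalIntegral.integral_congr fun y hy => by simp only [hu hx, hu hy]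
  have hA : (∫ x in a..b, v x ^ 2) = ∫ x in a..b, u x ^ 2 :=
    intervalIntegral.integral_congr fun x hx => by simp only [hu hx]
  have hB : (∫ x in a..b, v' x ^ 2) = ∫ x in a..b, w x ^ 2 :=
    intervalIntegral.integral_congr fun x hx => by simp only [hw hx]
  rw [hI, hA, hB]
  exact intervalIntegral_slobodeckij_le_of_ftc hab
    (continuous_IccExtend_iff.2 (continuousOn_iff_continuous_domRestrict.1 hv))
    (continuous_IccExtend_iff.2 (continuousOn_iff_continuous_domRestrict.1 hcont)) hftc

/-- Gagliardo–Nirenberg type estimate for the Aronszajn–Slobodeckij `H^{1/2}` seminorm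
(Lemma 3.4): there is a constant `C`, independent of the interval `(a,b)` and of `v`, with
`|v|²_{H^{1/2}(a,b)} ≤ C² ‖v‖_{L²(a,b)} ‖v'‖_{L²(a,b)}` for all `v ∈ H¹(a,b)`. -/
theorem seminorm_half_interpolation :
    ∃ C : ℝ, 0 < C ∧ ∀ (a b : ℝ), a < b → ∀ (v v' : ℝ → ℝ),
      (∀ x ∈ Set.Icc a b, HasDerivAt v (v' x) x) → ContinuousOn v' (Set.Icc a b) →
      (∫ x in a..b, ∫ y in a..b, (v x - v y) ^ 2 / |x - y| ^ 2) ≤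
        C ^ 2 * (∫ x in a..b, (v x) ^ 2) ^ ((1:ℝ)/2) *
          (∫ x in a..b, (v' x) ^ 2) ^ ((1:ℝ)/2) := by
  refine ⟨√8, by positivity, fun a b hab v v' hderiv hcont => ?_⟩
  rw [Real.sq_sqrt (by norm_num), ← Real.sqrt_eq_rpow, ← Real.sqrt_eq_rpow]
  exact intervalIntegral_slobodeckij_le_of_hasDerivAt hab.le hderiv hcont
end

section
/- Let ξᵢ (0 ≤ i ≤ p) be the Gauss–Legendre–Lobatto nodes on [−1,1], i.e. the zeros of (1−ξ²)L_p'(ξ), and let φ̂₀ be the Lagrange basis polynomial of degree p with φ̂₀(ξ₀) = 1 at ξ₀ = −1 and φ̂₀(ξⱼ) = 0 at the other nodes. Then ‖φ̂₀‖_{L²(−1,1)} ≤ 2/√(p(p+1)). -/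
/-!
Let `L = L_p`. The polynomial `G(ξ) = (1 - ξ) L'(ξ)` has degree `p` and vanishes at every node
except `ξ₀ = -1`, so `φ̂₀ = G / G(-1)` with `G(-1) = 2 L'(-1)`. As `(1 - ξ)² ≤ 4` on `[-1, 1]`,
`‖φ̂₀‖² ≤ ‖L'‖² / L'(-1)²`. Integrating by parts, and using that `L` is orthogonal to `L''`,
`‖L'‖² = [L L']₋₁¹ = p(p+1)`; the Leibniz rule in Rodrigues' formula gives
`L(±1) = (±1)^p` and `L'(±1) = (±1)^(p+1) p(p+1)/2`.
-/

open Polynomial intervalIntegral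

theorem neg_one_pow_sq {M : Type*} [Monoid M] [HasDistribNeg M] (n : ℕ) :
    ((-1 : M) ^ n) ^ 2 = 1 := by
  rw [← pow_mul, pow_mul', neg_one_sq, one_pow]

namespace Polynomial

variable {R : Type*} [CommRing R]

theorem eval_iterate_derivative_X_sub_C_pow_self (a : R) (n k : ℕ) :
    (derivative^[k] ((X - C a) ^ n)).eval a = if k = n then (n.factorial : R) else 0 := by
  rw [iterate_derivative_X_sub_pow]
  split_ifs with h
  · simp [h, Nat.descFactorial_self]
  · rcases lt_or_gt_of_ne h with hlt | hgt
    · simp [Nat.sub_ne_zero_of_lt hlt]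
    · simp [Nat.descFactorial_eq_zero_iff_lt.mpr hgt]

theorem eval_iterate_derivative_X_sub_C_pow_mul (a : R) (r : R[X]) (n j : ℕ) :
    (derivative^[n + j] ((X - C a) ^ n * r)).eval a =
      ((n + j).choose j * n.factorial : R) * (derivative^[j] r).eval a := by
  rw [iterate_derivative_mul, eval_finsetSum, Finset.sum_eq_single_of_mem j (by simp)]
  · simp [eval_iterate_derivative_X_sub_C_pow_self, mul_assoc]
  · intro k hk hkj
    have : n + j - k ≠ n := by rw [Finset.mem_range] at hk; omega
    simp [eval_iterate_derivative_X_sub_C_pow_self, this]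

theorem eval_iterate_derivative_eq_zero_of_X_sub_C_pow_dvd {a : R} {n j : ℕ} {q : R[X]}
    (hq : (X - C a) ^ n ∣ q) (hj : j < n) : (derivative^[j] q).eval a = 0 := by
  obtain ⟨r, hr⟩ := pow_sub_dvd_iterate_derivative_of_pow_dvd j hq
  rw [hr, eval_mul, eval_pow, eval_sub, eval_X, eval_C, sub_self, zero_pow (by omega), zero_mul]

theorem iteratedDeriv_eval (q : ℝ[X]) (n : ℕ) :
    iteratedDeriv n (fun x => q.eval x) = fun x => (derivative^[n] q).eval x := by
  induction n generalizing q with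
  | zero => simp
  | succ n ih =>
    have hderiv : _root_.deriv (fun x => q.eval x) = fun x => (derivative q).eval x :=
      _root_.funext fun _ => q.deriv
    rw [iteratedDeriv_succ', hderiv, ih, Function.iterate_succ_apply]

theorem integral_eval_derivative_mul (f g : ℝ[X]) (a b : ℝ) :
    ∫ x in a..b, (derivative f).eval x * g.eval x =
      f.eval b * g.eval b - f.eval a * g.eval a -
        ∫ x in a..b, f.eval x * (derivative g).eval x := by
  simp_rw [mul_comm ((derivative f).eval _), mul_comm (f.eval _)]
  exact integral_mul_deriv_eq_deriv_mul (fun x _ => g.hasDerivAt x) (fun x _ => f.hasDerivAt x)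
    (g.derivative.continuous.intervalIntegrable _ _)
    (f.derivative.continuous.intervalIntegrable _ _)

theorem integral_eval_iterate_derivative_mul_eq_zero {a b : ℝ} {q : ℝ[X]} {k : ℕ}
    (hq : ∀ j < k, (derivative^[j] q).eval a = 0 ∧ (derivative^[j] q).eval b = 0)
    {r : ℝ[X]} (hr : derivative^[k] r = 0) :
    ∫ x in a..b, (derivative^[k] q).eval x * r.eval x = 0 := by
  induction k generalizing r with
  | zero => simp_all
  | succ k ih =>
    obtain ⟨ha, hb⟩ := hq k k.lt_succ_self
    rw [Function.iterate_succ_apply', integral_eval_derivative_mul, ha, hb,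
      ih (fun j hj => hq j (by omega)) (by rwa [← Function.iterate_succ_apply])]
    ring

end Polynomial

noncomputable def legendrePoly (n : ℕ) : ℝ[X] :=
  C ((-1 : ℝ) ^ n / (2 ^ n * n.factorial)) * derivative^[n] ((1 - X ^ 2) ^ n)

theorem legendre_eq_eval (n : ℕ) : legendre n = fun x => (legendrePoly n).eval x := by
  have hpow : (fun x : ℝ => (1 - x ^ 2) ^ n) = fun x => ((1 - X ^ 2) ^ n : ℝ[X]).eval x := by
    simp
  ext x
  rw [legendre, hpow, iteratedDeriv_eval, legendrePoly, eval_mul, eval_C]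

theorem natDegree_legendrePoly_le (n : ℕ) : (legendrePoly n).natDegree ≤ n := by
  have hsq : (1 - X ^ 2 : ℝ[X]).natDegree ≤ 2 :=
    (natDegree_sub_le _ _).trans (by simp)
  refine (natDegree_C_mul_le _ _).trans <| (natDegree_iterate_derivative _ _).trans ?_
  have := (natDegree_pow_le (p := (1 - X ^ 2 : ℝ[X])) (n := n)).trans (Nat.mul_le_mul_left n hsq)
  omega

theorem one_sub_X_sq_pow_eq {a : ℝ} (ha : a ^ 2 = 1) (n : ℕ) :
    ((1 - X ^ 2) ^ n : ℝ[X]) = (X - C a) ^ n * (C ((-1) ^ n) * (X + C a) ^ n) := by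
  have hCa : C a ^ 2 = 1 := by rw [← C_pow, ha, C_1]
  have h : (1 - X ^ 2 : ℝ[X]) = (X - C a) * (C (-1) * (X + C a)) := by
    rw [C_neg, C_1]; linear_combination -hCa
  rw [h, mul_pow, mul_pow, C_pow]

theorem eval_legendrePoly {a : ℝ} (ha : a ^ 2 = 1) (n : ℕ) :
    (legendrePoly n).eval a = a ^ n := by
  have h := eval_iterate_derivative_X_sub_C_pow_mul a (C ((-1) ^ n) * (X + C a) ^ n) n 0
  rw [add_zero, ← one_sub_X_sq_pow_eq ha] at h
  rw [legendrePoly, eval_mul, eval_C, h]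
  simp only [Nat.choose_zero_right, Function.iterate_zero_apply, eval_mul, eval_C, eval_pow,
    eval_add, eval_X, Nat.cast_one, ← two_mul, mul_pow]
  field_simp
  rw [neg_one_pow_sq, one_mul]

theorem eval_derivative_legendrePoly {a : ℝ} (ha : a ^ 2 = 1) (n : ℕ) :
    (derivative (legendrePoly n)).eval a = a ^ (n + 1) * (n * (n + 1) / 2) := by
  have h := eval_iterate_derivative_X_sub_C_pow_mul a (C ((-1) ^ n) * (X + C a) ^ n) n 1
  rw [← one_sub_X_sq_pow_eq ha] at h
  rw [legendrePoly, derivative_C_mul, ← Function.iterate_succ_apply' derivative, eval_mul, eval_C,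
    h, Function.iterate_one, derivative_C_mul, derivative_X_add_C_pow]
  rcases n with _ | m
  · simp
  simp only [Nat.choose_one_right, eval_mul, eval_C, eval_pow, eval_add, eval_X,
    Nat.add_sub_cancel, ← two_mul, mul_pow]
  field_simp
  push_cast
  linear_combination ((m : ℝ) + 2) * 2 ^ (m + 1) * a ^ m * (neg_one_pow_sq (M := ℝ) (m + 1) - ha)

theorem integral_legendrePoly_mul_eq_zero {n : ℕ} {q : ℝ[X]} (hq : derivative^[n] q = 0) :
    ∫ x in (-1:ℝ)..1, (legendrePoly n).eval x * q.eval x = 0 := by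
  have hdvd (a : ℝ) (ha : a ^ 2 = 1) : (X - C a) ^ n ∣ (1 - X ^ 2 : ℝ[X]) ^ n := by
    rw [one_sub_X_sq_pow_eq ha]; exact dvd_mul_right _ _
  have hvanish (j : ℕ) (hj : j < n) :
      (derivative^[j] ((1 - X ^ 2 : ℝ[X]) ^ n)).eval (-1) = 0 ∧
        (derivative^[j] ((1 - X ^ 2 : ℝ[X]) ^ n)).eval 1 = 0 :=
    ⟨eval_iterate_derivative_eq_zero_of_X_sub_C_pow_dvd (hdvd (-1) (by norm_num)) hj,
      eval_iterate_derivative_eq_zero_of_X_sub_C_pow_dvd (hdvd 1 (by norm_num)) hj⟩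
  simp_rw [legendrePoly, eval_mul, eval_C, mul_assoc]
  rw [integral_const_mul, integral_eval_iterate_derivative_mul_eq_zero hvanish hq, mul_zero]

theorem integral_derivative_legendrePoly_sq (n : ℕ) :
    ∫ x in (-1:ℝ)..1, (derivative (legendrePoly n)).eval x ^ 2 = n * (n + 1) := by
  have horth : ∫ x in (-1:ℝ)..1,
      (legendrePoly n).eval x * (derivative (derivative (legendrePoly n))).eval x = 0 := by
    refine integral_legendrePoly_mul_eq_zero ?_
    rw [← Function.iterate_succ_apply, ← Function.iterate_succ_apply]
    exact iterate_derivative_eq_zero ((natDegree_legendrePoly_le n).trans_lt (by omega))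
  simp_rw [sq]
  rw [integral_eval_derivative_mul, horth, eval_legendrePoly (by norm_num),
    eval_legendrePoly (by norm_num), eval_derivative_legendrePoly (by norm_num),
    eval_derivative_legendrePoly (by norm_num), one_pow, one_pow, pow_succ]
  linear_combination ((n : ℝ) * (n + 1) / 2) * neg_one_pow_sq (M := ℝ) n

theorem integral_one_sub_mul_sq_le {f : ℝ → ℝ}
    (hf : IntervalIntegrable (fun x => f x ^ 2) MeasureTheory.volume (-1) 1) :
    ∫ x in (-1:ℝ)..1, ((1 - x) * f x) ^ 2 ≤ 4 * ∫ x in (-1:ℝ)..1, f x ^ 2 := by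
  rw [← integral_const_mul]
  simp_rw [mul_pow]
  refine integral_mono_on (by norm_num) ?_ (hf.const_mul 4) fun x hx => ?_
  · exact hf.continuousOn_mul (by fun_prop)
  · have : (1 - x) ^ 2 ≤ 4 := by nlinarith [hx.1, hx.2]
    exact mul_le_mul_of_nonneg_right this (sq_nonneg _)

-- The explicit `φ̂₀(ξ) = -(1 - ξ²) L_p'(ξ) / (p(p+1) (ξ + 1) L_p(-1))`, with `L_p(-1) = (-1)^p`.
noncomputable def gllLeftBasis (p : ℕ) : ℝ[X] :=
  C ((-1 : ℝ) ^ (p + 1) / (p * (p + 1))) * ((1 - X) * derivative (legendrePoly p))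

theorem natDegree_gllLeftBasis_le {p : ℕ} (hp : 1 ≤ p) : (gllLeftBasis p).natDegree ≤ p := by
  have hL' : (derivative (legendrePoly p)).natDegree ≤ p - 1 :=
    (natDegree_derivative_le _).trans (Nat.sub_le_sub_right (natDegree_legendrePoly_le p) 1)
  have h1X : (1 - X : ℝ[X]).natDegree ≤ 1 := (natDegree_sub_le _ _).trans (by simp)
  exact (natDegree_C_mul_le _ _).trans (natDegree_mul_le.trans (by omega))

theorem eval_gllLeftBasis_neg_one {p : ℕ} (hp : 1 ≤ p) : (gllLeftBasis p).eval (-1) = 1 := by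
  have : (0 : ℝ) < p := by exact_mod_cast hp
  simp only [gllLeftBasis, eval_mul, eval_C, eval_sub, eval_one, eval_X,
    eval_derivative_legendrePoly (a := -1) (by norm_num)]
  field_simp
  rw [neg_one_pow_sq]; norm_num

theorem eval_gllLeftBasis_eq_zero {p : ℕ} {x : ℝ} (hx : x ≠ -1)
    (h : (1 - x ^ 2) * deriv (legendre p) x = 0) : (gllLeftBasis p).eval x = 0 := by
  have hx' : 1 + x ≠ 0 := fun h => hx (by linarith)
  rw [legendre_eq_eval, Polynomial.deriv, show 1 - x ^ 2 = (1 + x) * (1 - x) by ring,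
    mul_assoc] at h
  simp [gllLeftBasis, (mul_eq_zero.mp h).resolve_left hx']

theorem integral_gllLeftBasis_sq_le {p : ℕ} (hp : 1 ≤ p) :
    ∫ x in (-1:ℝ)..1, (gllLeftBasis p).eval x ^ 2 ≤ 4 / (p * (p + 1)) := by
  have : (0 : ℝ) < p := by exact_mod_cast hp
  set L' := derivative (legendrePoly p)
  calc ∫ x in (-1:ℝ)..1, (gllLeftBasis p).eval x ^ 2
      = ((-1) ^ (p + 1) / (p * (p + 1))) ^ 2 * ∫ x in (-1:ℝ)..1, ((1 - x) * L'.eval x) ^ 2 := by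
        simp [gllLeftBasis, L', mul_pow, integral_const_mul]
    _ ≤ ((-1) ^ (p + 1) / (p * (p + 1))) ^ 2 * (4 * ∫ x in (-1:ℝ)..1, L'.eval x ^ 2) := by
        gcongr
        exact integral_one_sub_mul_sq_le ((L'.continuous.pow 2).intervalIntegrable _ _)
    _ = 4 / (p * (p + 1)) := by
        rw [integral_derivative_legendrePoly_sq]
        field_simp
        rw [neg_one_pow_sq]

/-- The Lagrange basis polynomial `φ̂₀` of degree `p` at the Gauss–Legendre–Lobatto nodes
(the zeros of `(1−ξ²)L_p'(ξ)`), with `φ̂₀(ξ₀) = 1` at `ξ₀ = −1` and `φ̂₀(ξⱼ) = 0` at the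
other nodes, satisfies `‖φ̂₀‖_{L²(−1,1)} ≤ 2/√(p(p+1))`. -/
theorem gll_basis_L2_bound (p : ℕ) (hp : 1 ≤ p)
    (ξ : Fin (p + 1) → ℝ) (hinj : Function.Injective ξ)
    (hξ0 : ξ 0 = -1)
    (hzero : ∀ i, (1 - ξ i ^ 2) * deriv (legendre p) (ξ i) = 0)
    (φ : Polynomial ℝ) (hdeg : φ.natDegree ≤ p)
    (hφ0 : φ.eval (ξ 0) = 1) (hφj : ∀ j : Fin (p + 1), j ≠ 0 → φ.eval (ξ j) = 0) :
    (∫ x in (-1 : ℝ)..1, (φ.eval x) ^ 2) ^ ((1:ℝ)/2) ≤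
      2 / Real.sqrt (p * (p + 1)) := by
  have hφ : φ = gllLeftBasis p := by
    refine eq_of_natDegree_lt_card_of_eval_eq _ _ hinj (fun i => ?_) ?_
    · rcases eq_or_ne i 0 with rfl | hi
      · rw [hφ0, hξ0, eval_gllLeftBasis_neg_one hp]
      · rw [hφj i hi, eval_gllLeftBasis_eq_zero (fun h => hi (hinj (h.trans hξ0.symm))) (hzero i)]
    · simpa using Nat.lt_succ_of_le (max_le hdeg (natDegree_gllLeftBasis_le hp))
  rw [hφ, ← Real.sqrt_eq_rpow]
  calc Real.sqrt (∫ x in (-1:ℝ)..1, (gllLeftBasis p).eval x ^ 2)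
      ≤ Real.sqrt (4 / (p * (p + 1))) := Real.sqrt_le_sqrt (integral_gllLeftBasis_sq_le hp)
    _ = 2 / Real.sqrt (p * (p + 1)) := by rw [Real.sqrt_div' _ (by positivity)]; norm_num
end
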